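/- arXiv:2103.11992 — 6 statements merged into one kernel-verified Lean document; each statement's English description precedes it below -/
import Mathlib

section
/- Let k ≥ 1 and let G be a factorization of the complete graph K_ℕ on a countably infinite vertex set into factors each isomorphic to the k-star S_k. Then there is at most one vertex of K_ℕ that is not a center of any member of G; consequently G is countably infinite. -/
/-!
Every edge of a `k`-star has a center as an endpoint, so in a factorization of the complete
graph two vertices that are centers of no factor could not be joined by an edge of any factor.
Each factor has an edge, so distinct factors are separated by edges and there are countably
many of them; each has only `k` centers, so finitely many factors would leave infinitely many
vertices that are centers of none.
-/

/-- The `k`-star `S_k`: the vertex-disjoint union of `k` countable stars, realized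
on the vertex set `Fin k × ℕ`, where `(i, 0)` is the center of the `i`-th star. -/
def kStar (k : ℕ) : SimpleGraph (Fin k × ℕ) :=
  SimpleGraph.fromRel (fun a b => a.1 = b.1 ∧ a.2 = 0 ∧ b.2 ≠ 0)

/-- A set `𝒢` of graphs is a factorization of `Λ`: each member is a (spanning)
subgraph of `Λ` and the edge sets of the members partition the edge set of `Λ`. -/
def IsFactorizationSet {V : Type*} (Λ : SimpleGraph V) (𝒢 : Set (SimpleGraph V)) : Prop :=
  (∀ Γ ∈ 𝒢, Γ ≤ Λ) ∧ ∀ e ∈ Λ.edgeSet, ∃! Γ, Γ ∈ 𝒢 ∧ e ∈ Γ.edgeSet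

namespace SimpleGraph

variable {V W : Type*}

def centers (G : SimpleGraph V) : Set V := {v | (G.neighborSet v).Infinite}

theorem Iso.apply_mem_centers_iff {G : SimpleGraph V} {H : SimpleGraph W} (e : G ≃g H) (v : V) :
    e v ∈ H.centers ↔ v ∈ G.centers := by
  simp only [centers, ← Set.infinite_coe_iff]
  exact (e.mapNeighborSet v).symm.infinite_iff

theorem Iso.image_centers {G : SimpleGraph V} {H : SimpleGraph W} (e : G ≃g H) :
    e '' G.centers = H.centers := by
  ext w
  refine ⟨?_, fun hw => ⟨e.symm w, ?_, e.apply_symm_apply w⟩⟩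
  · rintro ⟨v, hv, rfl⟩
    exact (e.apply_mem_centers_iff v).mpr hv
  · rwa [← e.apply_mem_centers_iff, e.apply_symm_apply]

end SimpleGraph

namespace IsFactorizationSet

open SimpleGraph

variable {V : Type*} {Λ : SimpleGraph V} {𝒢 : Set (SimpleGraph V)}

theorem exists_adj (h : IsFactorizationSet Λ 𝒢) {u v : V} (huv : Λ.Adj u v) :
    ∃ Γ ∈ 𝒢, Γ.Adj u v :=
  (h.2 s(u, v) huv).exists

theorem eq_of_mem_edgeSet (h : IsFactorizationSet Λ 𝒢) {Γ Γ' : SimpleGraph V} (hΓ : Γ ∈ 𝒢)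
    (hΓ' : Γ' ∈ 𝒢) {e : Sym2 V} (he : e ∈ Γ.edgeSet) (he' : e ∈ Γ'.edgeSet) : Γ = Γ' :=
  (h.2 e (edgeSet_mono (h.1 Γ hΓ) he)).unique ⟨hΓ, he⟩ ⟨hΓ', he'⟩

theorem countable [Countable V] (h : IsFactorizationSet Λ 𝒢)
    (hne : ∀ Γ ∈ 𝒢, Γ.edgeSet.Nonempty) : 𝒢.Countable := by
  choose f hf using fun Γ : 𝒢 => hne Γ Γ.2
  have hinj : Function.Injective f := fun Γ Γ' hff =>
    Subtype.ext (h.eq_of_mem_edgeSet Γ.2 Γ'.2 (hf Γ) (hff ▸ hf Γ'))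
  exact Set.countable_coe_iff.mp hinj.countable

theorem compl_biUnion_subsingleton (h : IsFactorizationSet ⊤ 𝒢) (C : SimpleGraph V → Set V)
    (hC : ∀ Γ ∈ 𝒢, ∀ u v, Γ.Adj u v → u ∈ C Γ ∨ v ∈ C Γ) :
    (⋃ Γ ∈ 𝒢, C Γ)ᶜ.Subsingleton := by
  intro u hu v hv
  by_contra huv
  obtain ⟨Γ, hΓ, hadj⟩ := h.exists_adj ((top_adj u v).mpr huv)
  simp only [Set.mem_compl_iff, Set.mem_iUnion, not_exists] at hu hv
  exact (hC Γ hΓ u v hadj).elim (hu Γ hΓ) (hv Γ hΓ)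

end IsFactorizationSet

theorem Set.Infinite.of_finite_compl_biUnion {α ι : Type*} [Infinite α] {s : Set ι}
    {t : ι → Set α} (ht : ∀ i ∈ s, (t i).Finite) (hc : (⋃ i ∈ s, t i)ᶜ.Finite) : s.Infinite :=
  fun hs => Set.infinite_univ (Set.union_compl_self (⋃ i ∈ s, t i) ▸ (hs.biUnion ht).union hc)

open SimpleGraph

@[simp]
theorem kStar_adj {k : ℕ} {a b : Fin k × ℕ} :
    (kStar k).Adj a b ↔ a ≠ b ∧
      ((a.1 = b.1 ∧ a.2 = 0 ∧ b.2 ≠ 0) ∨ (b.1 = a.1 ∧ b.2 = 0 ∧ a.2 ≠ 0)) := by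
  simp [kStar, fromRel_adj]

theorem kStar_adj_succ {k : ℕ} (i : Fin k) (n : ℕ) : (kStar k).Adj (i, 0) (i, n + 1) := by
  simp

theorem kStar_mem_centers_iff {k : ℕ} {a : Fin k × ℕ} : a ∈ (kStar k).centers ↔ a.2 = 0 := by
  refine ⟨fun ha => by_contra fun h0 => ha ?_, fun h0 => ?_⟩
  · refine (Set.finite_singleton (a.1, 0)).subset fun b hb => ?_
    rw [mem_neighborSet, kStar_adj] at hb
    rcases hb.2 with ⟨-, h, -⟩ | ⟨h1, h2, -⟩
    · exact absurd h h0
    · simp [Prod.ext_iff, h1, h2]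
  · obtain ⟨i, m⟩ := a
    subst h0
    exact Set.infinite_of_injective_forall_mem (fun m n h => by simpa using h) (kStar_adj_succ i)

theorem kStar_centers_finite (k : ℕ) : (kStar k).centers.Finite :=
  (Set.finite_range fun i : Fin k => (i, 0)).subset fun a ha =>
    ⟨a.1, Prod.ext rfl (kStar_mem_centers_iff.mp ha).symm⟩

theorem kStar_center_of_adj {k : ℕ} {a b : Fin k × ℕ} (h : (kStar k).Adj a b) :
    a ∈ (kStar k).centers ∨ b ∈ (kStar k).centers := by
  simp only [kStar_mem_centers_iff]
  rcases (kStar_adj.mp h).2 with ⟨-, h, -⟩ | ⟨-, h, -⟩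
  exacts [Or.inl h, Or.inr h]

section IsoKStar

variable {V : Type*} {k : ℕ} {Γ : SimpleGraph V} (e : kStar k ≃g Γ)
include e

theorem centers_finite_of_iso_kStar : Γ.centers.Finite :=
  e.image_centers ▸ (kStar_centers_finite k).image e

theorem center_of_adj_of_iso_kStar {u v : V} (h : Γ.Adj u v) : u ∈ Γ.centers ∨ v ∈ Γ.centers := by
  rw [← e.apply_symm_apply u, ← e.apply_symm_apply v, e.apply_mem_centers_iff,
    e.apply_mem_centers_iff]
  exact kStar_center_of_adj (e.symm.map_adj_iff.mpr h)

theorem edgeSet_nonempty_of_iso_kStar (v : V) : Γ.edgeSet.Nonempty :=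
  ⟨_, (mem_edgeSet (G := Γ)).mpr (e.map_adj_iff.mpr (kStar_adj_succ (e.symm v).1 0))⟩

end IsoKStar

theorem stmt_13_general (k : ℕ) (𝒢 : Set (SimpleGraph ℕ))
    (hfac : IsFactorizationSet (⊤ : SimpleGraph ℕ) 𝒢)
    (hiso : ∀ Γ ∈ 𝒢, Nonempty (kStar k ≃g Γ)) :
    {v : ℕ | ∀ Γ ∈ 𝒢, ¬ (Γ.neighborSet v).Infinite}.Subsingleton ∧
      𝒢.Countable ∧ 𝒢.Infinite := by
  have hS : {v : ℕ | ∀ Γ ∈ 𝒢, ¬ (Γ.neighborSet v).Infinite} = (⋃ Γ ∈ 𝒢, Γ.centers)ᶜ := by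
    ext v
    simp [centers]
  have hsub : (⋃ Γ ∈ 𝒢, Γ.centers)ᶜ.Subsingleton :=
    hfac.compl_biUnion_subsingleton centers fun Γ hΓ _ _ =>
      center_of_adj_of_iso_kStar (hiso Γ hΓ).some
  refine ⟨hS ▸ hsub, ?_, ?_⟩
  · exact hfac.countable fun Γ hΓ => edgeSet_nonempty_of_iso_kStar (hiso Γ hΓ).some 0
  · exact .of_finite_compl_biUnion (fun Γ hΓ => centers_finite_of_iso_kStar (hiso Γ hΓ).some)
      hsub.finite

/-- if `𝒢` is a factorization of the complete graph `K_ℕ` into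
`k`-stars (`k ≥ 1`), then at most one vertex of `K_ℕ` fails to be a center
(a vertex of infinite degree) of some member of `𝒢`; consequently `𝒢` is
countably infinite. -/
theorem stmt_13 (k : ℕ) (hk : 1 ≤ k) (𝒢 : Set (SimpleGraph ℕ))
    (hfac : IsFactorizationSet (⊤ : SimpleGraph ℕ) 𝒢)
    (hiso : ∀ Γ ∈ 𝒢, Nonempty (kStar k ≃g Γ)) :
    {v : ℕ | ∀ Γ ∈ 𝒢, ¬ (Γ.neighborSet v).Infinite}.Subsingleton ∧
      𝒢.Countable ∧ 𝒢.Infinite :=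
  stmt_13_general k 𝒢 hfac hiso
end

section
/- There is no factorization of the complete graph K_ℕ on a countably infinite vertex set into factors each isomorphic to the 2-star S_2; that is, FP(S_2) has no solution. -/
/-!
Every factor has two non-adjacent centers, and each of its edges joins a leaf to a center.
Call a finite vertex set `K` closed if it contains both or neither center of every factor.
The ordered pairs of distinct vertices of a closed `K` with `n` elements are then partitioned
among the factors centered in `K`, each of which contributes exactly `2 (n - 2)` of them;
so `n (n - 1) = 2 f (n - 2)`, which forces `n ∈ {0, 1, 3, 4}`. Growing a set from a center
by repeatedly adding a missing center keeps at least `#K - 1` factors centered inside it,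
and the same count stops the growth before five vertices, at a closed set. On an infinite
vertex set this yields two disjoint closed sets with at least three vertices each, whose
union is closed with at least six.
-/

open Finset
open scoped Classical

namespace SimpleGraph

variable {V W : Type*}

/-- Unlike in `S₂`, the leaf sets of the two centers may be finite, even empty. -/
structure IsDoubleStar (G : SimpleGraph V) (a b : V) : Prop where
  ne : a ≠ b
  not_adj : ¬ G.Adj a b
  leaf_adj_iff : ∀ v, v ≠ a → v ≠ b → (∀ w, G.Adj v w ↔ w = a) ∨ (∀ w, G.Adj v w ↔ w = b)

namespace IsDoubleStar

variable {G : SimpleGraph V} {a b u v w : V}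

lemma eq_or_eq_of_adj (h : G.IsDoubleStar a b) (hva : v ≠ a) (hvb : v ≠ b) (hvw : G.Adj v w) :
    w = a ∨ w = b := by
  rcases h.leaf_adj_iff v hva hvb with hv | hv
  exacts [.inl ((hv w).1 hvw), .inr ((hv w).1 hvw)]

lemma exists_adj (h : G.IsDoubleStar a b) (hva : v ≠ a) (hvb : v ≠ b) :
    ∃ w, (w = a ∨ w = b) ∧ G.Adj v w := by
  rcases h.leaf_adj_iff v hva hvb with hv | hv
  exacts [⟨a, .inl rfl, (hv a).2 rfl⟩, ⟨b, .inr rfl, (hv b).2 rfl⟩]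

lemma eq_of_adj_of_adj (h : G.IsDoubleStar a b) (hva : v ≠ a) (hvb : v ≠ b) (hw : G.Adj v w)
    {w' : V} (hw' : G.Adj v w') : w = w' := by
  rcases h.leaf_adj_iff v hva hvb with hv | hv
  · rw [(hv w).1 hw, (hv w').1 hw']
  · rw [(hv w).1 hw, (hv w').1 hw']

lemma not_center_of_adj (h : G.IsDoubleStar a b) (hu : u = a ∨ u = b) (huw : G.Adj u w) :
    w ≠ a ∧ w ≠ b := by
  constructor <;> rintro rfl <;> rcases hu with rfl | rfl
  exacts [huw.ne rfl, h.not_adj huw.symm, h.not_adj huw, huw.ne rfl]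

lemma center_or_center_of_adj (h : G.IsDoubleStar a b) (huw : G.Adj u w) :
    (u = a ∨ u = b) ∨ (w = a ∨ w = b) := by
  by_cases hu : u = a ∨ u = b
  · exact .inl hu
  · rw [not_or] at hu
    exact .inr (h.eq_or_eq_of_adj hu.1 hu.2 huw)

lemma map {G' : SimpleGraph W} (e : G ≃g G') (h : G.IsDoubleStar a b) :
    G'.IsDoubleStar (e a) (e b) where
  ne := e.injective.ne h.ne
  not_adj := e.map_adj_iff.not.2 h.not_adj
  leaf_adj_iff v' hva hvb := by
    obtain ⟨v, rfl⟩ := e.surjective v'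
    have hforall (c : V) : (∀ w, G.Adj v w ↔ w = c) → ∀ w', G'.Adj (e v) w' ↔ w' = e c := by
      intro hv w'
      obtain ⟨w, rfl⟩ := e.surjective w'
      rw [e.map_adj_iff, e.injective.eq_iff, hv]
    exact (h.leaf_adj_iff v (ne_of_apply_ne e hva) (ne_of_apply_ne e hvb)).imp
      (hforall a) (hforall b)

end IsDoubleStar

noncomputable def adjPairs (G : SimpleGraph V) (K : Finset V) : Finset (V × V) :=
  {p ∈ K.offDiag | G.Adj p.1 p.2}

lemma mem_adjPairs {G : SimpleGraph V} {K : Finset V} {p : V × V} :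
    p ∈ G.adjPairs K ↔ p.1 ∈ K ∧ p.2 ∈ K ∧ G.Adj p.1 p.2 := by
  simp only [adjPairs, mem_filter, mem_offDiag]
  exact ⟨fun h => ⟨h.1.1, h.1.2.1, h.2⟩, fun h => ⟨⟨h.1, h.2.1, h.2.2.ne⟩, h.2.2⟩⟩

/-- Each leaf in `K` contributes the two pairs joining it to its center. -/
lemma IsDoubleStar.card_adjPairs {G : SimpleGraph V} {a b : V} {K : Finset V}
    (h : G.IsDoubleStar a b) (ha : a ∈ K) (hb : b ∈ K) :
    #(G.adjPairs K) = 2 * (#K - 2) := by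
  set leaves := (K.erase a).erase b
  have hleaves : #leaves = #K - 2 := by
    rw [card_erase_of_mem (mem_erase.2 ⟨h.ne.symm, hb⟩), card_erase_of_mem ha]
    rfl
  have hleafFirst : #{p ∈ G.adjPairs K | p.1 ≠ a ∧ p.1 ≠ b} = #leaves := by
    refine card_nbij Prod.fst ?_ ?_ ?_
    · intro p hp
      simp only [coe_filter, mem_adjPairs, Set.mem_ofPred_eq] at hp
      simp [leaves, hp.1.1, hp.2.1, hp.2.2]
    · intro p hp q hq hpq
      simp only [coe_filter, mem_adjPairs, Set.mem_ofPred_eq] at hp hq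
      refine Prod.ext hpq (h.eq_of_adj_of_adj hp.2.1 hp.2.2 hp.1.2.2 ?_)
      rw [hpq]
      exact hq.1.2.2
    · intro v hv
      simp only [leaves, coe_erase, Set.mem_sdiff, mem_coe, Set.mem_singleton_iff] at hv
      obtain ⟨w, hw, hvw⟩ := h.exists_adj hv.1.2 hv.2
      refine ⟨(v, w), ?_, rfl⟩
      simp only [coe_filter, mem_adjPairs, Set.mem_ofPred_eq]
      exact ⟨⟨hv.1.1, by rcases hw with rfl | rfl <;> assumption, hvw⟩, hv.1.2, hv.2⟩
  have hcenterFirst : #{p ∈ G.adjPairs K | ¬(p.1 ≠ a ∧ p.1 ≠ b)}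
      = #{p ∈ G.adjPairs K | p.1 ≠ a ∧ p.1 ≠ b} := by
    refine card_nbij' Prod.swap Prod.swap ?_ ?_ (fun _ _ => rfl) (fun _ _ => rfl)
    · intro p hp
      simp only [coe_filter, mem_adjPairs, Set.mem_ofPred_eq, not_and_or, not_not] at hp ⊢
      exact ⟨⟨hp.1.2.1, hp.1.1, hp.1.2.2.symm⟩, h.not_center_of_adj hp.2 hp.1.2.2⟩
    · intro p hp
      simp only [coe_filter, mem_adjPairs, Set.mem_ofPred_eq, not_and_or, not_not] at hp ⊢
      exact ⟨⟨hp.1.2.1, hp.1.1, hp.1.2.2.symm⟩, h.eq_or_eq_of_adj hp.2.1 hp.2.2 hp.1.2.2⟩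
  rw [← card_filter_add_card_filter_not (fun p : V × V => p.1 ≠ a ∧ p.1 ≠ b),
    hcenterFirst, hleafFirst, hleaves]
  ring

end SimpleGraph

lemma kStar_two_isDoubleStar : (kStar 2).IsDoubleStar (0, 0) (1, 0) where
  ne := by simp
  not_adj := by simp [kStar]
  leaf_adj_iff := by
    rintro ⟨j, n⟩ h0 h1
    have hn : n ≠ 0 := by
      rintro rfl
      fin_cases j <;> simp_all
    fin_cases j
    · exact .inl fun ⟨j', m⟩ => by fin_cases j' <;> simp +contextual [kStar, hn, Prod.ext_iff]
    · exact .inr fun ⟨j', m⟩ => by fin_cases j' <;> simp +contextual [kStar, hn, Prod.ext_iff]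

/-- A factorization of the complete graph on `V` into double stars with chosen centers. -/
structure DoubleStarFactorization (V ι : Type*) where
  graph : ι → SimpleGraph V
  center₁ : ι → V
  center₂ : ι → V
  isDoubleStar : ∀ i, (graph i).IsDoubleStar (center₁ i) (center₂ i)
  existsUnique_adj : ∀ ⦃u v : V⦄, u ≠ v → ∃! i, (graph i).Adj u v

namespace DoubleStarFactorization

variable {V ι : Type*} (D : DoubleStarFactorization V ι)

def IsClosed (K : Finset V) : Prop := ∀ i, D.center₁ i ∈ K ↔ D.center₂ i ∈ K

lemma card_biUnion_adjPairs (F : Finset ι) (K : Finset V) :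
    #(F.biUnion fun i => (D.graph i).adjPairs K) = ∑ i ∈ F, #((D.graph i).adjPairs K) := by
  refine card_biUnion fun i _ j _ hij => disjoint_left.2 fun p hpi hpj => hij ?_
  exact (D.existsUnique_adj (SimpleGraph.mem_adjPairs.1 hpi).2.2.ne).unique
    (SimpleGraph.mem_adjPairs.1 hpi).2.2 (SimpleGraph.mem_adjPairs.1 hpj).2.2

lemma card_mul_le_of_centers_mem {K : Finset V} {F : Finset ι}
    (hF : ∀ i ∈ F, D.center₁ i ∈ K ∧ D.center₂ i ∈ K) :
    #F * (2 * (#K - 2)) ≤ #K * (#K - 1) := calc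
  #F * (2 * (#K - 2)) = ∑ i ∈ F, #((D.graph i).adjPairs K) := by
    rw [sum_congr rfl fun i hi => (D.isDoubleStar i).card_adjPairs (hF i hi).1 (hF i hi).2,
      sum_const, smul_eq_mul]
  _ = #(F.biUnion fun i => (D.graph i).adjPairs K) := (D.card_biUnion_adjPairs F K).symm
  _ ≤ #K.offDiag := card_le_card <| biUnion_subset.2 fun _ _ => filter_subset _ _
  _ = #K * (#K - 1) := by rw [offDiag_card, Nat.mul_sub_one]

lemma card_le_four_of_card_le_succ {K : Finset V} {F : Finset ι}
    (hF : ∀ i ∈ F, D.center₁ i ∈ K ∧ D.center₂ i ∈ K) (hK : #K ≤ #F + 1) : #K ≤ 4 := by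
  have hcount := D.card_mul_le_of_centers_mem hF
  by_contra! h5
  obtain ⟨m, hm⟩ : ∃ m, #K = m + 5 := ⟨#K - 5, by omega⟩
  rw [hm, show m + 5 - 2 = m + 3 by omega, show m + 5 - 1 = m + 4 by omega] at hcount
  nlinarith

lemma exists_isClosed_superset (K : Finset V) (F : Finset ι)
    (hF : ∀ i ∈ F, D.center₁ i ∈ K ∧ D.center₂ i ∈ K) (hK : #K ≤ #F + 1) :
    ∃ K', D.IsClosed K' ∧ K ⊆ K' := by
  by_cases hclosed : D.IsClosed K
  · exact ⟨K, hclosed, subset_rfl⟩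
  obtain ⟨i, hi⟩ := not_forall.1 hclosed
  obtain ⟨x, hxK, hix⟩ : ∃ x ∉ K, D.center₁ i ∈ insert x K ∧ D.center₂ i ∈ insert x K := by
    by_cases h₁ : D.center₁ i ∈ K
    · exact ⟨D.center₂ i, fun h₂ => hi (iff_of_true h₁ h₂), mem_insert_of_mem h₁,
        mem_insert_self _ _⟩
    · exact ⟨D.center₁ i, h₁, mem_insert_self _ _,
        mem_insert_of_mem (by_contra fun h₂ => hi (iff_of_false h₁ h₂))⟩
  have hiF : i ∉ F := fun h => hi (iff_of_true (hF i h).1 (hF i h).2)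
  have hK4 := D.card_le_four_of_card_le_succ hF hK
  have hF' : ∀ j ∈ insert i F, D.center₁ j ∈ insert x K ∧ D.center₂ j ∈ insert x K := by
    intro j hj
    rcases mem_insert.1 hj with rfl | hj
    exacts [hix, ⟨mem_insert_of_mem (hF j hj).1, mem_insert_of_mem (hF j hj).2⟩]
  obtain ⟨K', hK', hsub⟩ := exists_isClosed_superset (insert x K) (insert i F) hF'
    (by rw [card_insert_of_notMem hxK, card_insert_of_notMem hiF]; omega)
  exact ⟨K', hK', (subset_insert x K).trans hsub⟩
termination_by 5 - #K
decreasing_by rw [card_insert_of_notMem hxK]; omega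

lemma exists_isClosed_center_mem (i : ι) : ∃ K, D.IsClosed K ∧ D.center₁ i ∈ K := by
  obtain ⟨K, hK, hsub⟩ := D.exists_isClosed_superset {D.center₁ i} ∅ (by simp) (by simp)
  exact ⟨K, hK, singleton_subset_iff.1 hsub⟩

variable {D}

lemma IsClosed.union {K L : Finset V} (hK : D.IsClosed K) (hL : D.IsClosed L) :
    D.IsClosed (K ∪ L) := fun i => by
  simp only [mem_union, hK i, hL i]

lemma IsClosed.sdiff {K L : Finset V} (hK : D.IsClosed K) (hL : D.IsClosed L) :
    D.IsClosed (K \ L) := fun i => by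
  simp only [mem_sdiff, hK i, hL i]

lemma IsClosed.centers_mem_of_adj {K : Finset V} (hK : D.IsClosed K) {i : ι} {u v : V}
    (huv : (D.graph i).Adj u v) (hu : u ∈ K) (hv : v ∈ K) :
    D.center₁ i ∈ K ∧ D.center₂ i ∈ K := by
  rw [← hK i, and_self]
  rcases (D.isDoubleStar i).center_or_center_of_adj huv with (rfl | rfl) | (rfl | rfl)
  exacts [hu, (hK i).2 hu, hv, (hK i).2 hv]

lemma IsClosed.exists_card_offDiag_eq {K : Finset V} (hK : D.IsClosed K) :
    ∃ F : Finset ι, #K.offDiag = #F * (2 * (#K - 2)) := by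
  have hfin : (⋃ p ∈ (K.offDiag : Set (V × V)), {i | (D.graph i).Adj p.1 p.2}).Finite :=
    K.offDiag.finite_toSet.biUnion fun p hp => Set.Subsingleton.finite fun _ hi _ hj =>
      (D.existsUnique_adj (mem_offDiag.1 hp).2.2).unique hi hj
  refine ⟨hfin.toFinset, ?_⟩
  have hcenters : ∀ i ∈ hfin.toFinset, D.center₁ i ∈ K ∧ D.center₂ i ∈ K := by
    intro i hi
    obtain ⟨p, hp, hadj⟩ := Set.mem_iUnion₂.1 (hfin.mem_toFinset.1 hi)
    exact hK.centers_mem_of_adj hadj (mem_offDiag.1 hp).1 (mem_offDiag.1 hp).2.1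
  calc #K.offDiag = #(hfin.toFinset.biUnion fun i => (D.graph i).adjPairs K) := by
        congr 1
        refine (biUnion_subset.2 fun _ _ => filter_subset _ _).antisymm' fun p hp => ?_
        obtain ⟨i, hi, -⟩ := D.existsUnique_adj (mem_offDiag.1 hp).2.2
        exact mem_biUnion.2
          ⟨i, hfin.mem_toFinset.2 (Set.mem_iUnion₂.2 ⟨p, hp, hi⟩), mem_filter.2 ⟨hp, hi⟩⟩
    _ = ∑ i ∈ hfin.toFinset, #((D.graph i).adjPairs K) := D.card_biUnion_adjPairs _ K
    _ = #hfin.toFinset * (2 * (#K - 2)) := by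
        rw [sum_congr rfl fun i hi => (D.isDoubleStar i).card_adjPairs (hcenters i hi).1
          (hcenters i hi).2, sum_const, smul_eq_mul]

/-- `n (n - 1) = 2 f (n - 2)` forces `n - 2 ∣ 2`. -/
lemma IsClosed.card_le_four {K : Finset V} (hK : D.IsClosed K) : #K ≤ 4 := by
  obtain ⟨F, hF⟩ := hK.exists_card_offDiag_eq
  by_contra! h5
  obtain ⟨m, hm⟩ : ∃ m, #K = m + 5 := ⟨#K - 5, by omega⟩
  rw [offDiag_card, hm, ← Nat.mul_sub_one, show m + 5 - 1 = m + 4 by omega,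
    show m + 5 - 2 = m + 3 by omega] at hF
  have hdvd : m + 3 ∣ 2 := by
    refine (Nat.dvd_add_right (dvd_mul_right (m + 3) (m + 6))).1 ⟨2 * #F, ?_⟩
    linarith
  have := Nat.le_of_dvd two_pos hdvd
  omega

lemma IsClosed.three_le_card {K : Finset V} (hK : D.IsClosed K) {i : ι}
    (hi : D.center₁ i ∈ K) : 3 ≤ #K := by
  have htwo : 2 ≤ #K := by
    rw [← card_pair (D.isDoubleStar i).ne]
    exact card_le_card (insert_subset hi (singleton_subset_iff.2 ((hK i).1 hi)))
  obtain ⟨F, hF⟩ := hK.exists_card_offDiag_eq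
  rw [offDiag_card] at hF
  by_contra! h
  rw [show #K = 2 by omega] at hF
  simp at hF

theorem isEmpty_of_infinite [Infinite V] : IsEmpty (DoubleStarFactorization V ι) := by
  refine ⟨fun D => ?_⟩
  obtain ⟨u, v, huv⟩ := exists_pair_ne V
  obtain ⟨i, -, -⟩ := D.existsUnique_adj huv
  obtain ⟨K₁, hK₁, hi⟩ := D.exists_isClosed_center_mem i
  obtain ⟨x, hx⟩ := Infinite.exists_notMem_finset K₁
  obtain ⟨y, hy⟩ := Infinite.exists_notMem_finset (insert x K₁)
  obtain ⟨j, hj, -⟩ := D.existsUnique_adj (ne_of_mem_of_not_mem (mem_insert_self x K₁) hy)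
  have hj₁ : D.center₁ j ∉ K₁ := by
    intro h₁
    have h₂ := (hK₁ j).1 h₁
    rcases (D.isDoubleStar j).center_or_center_of_adj hj with (rfl | rfl) | (rfl | rfl)
    exacts [hx h₁, hx h₂, hy (mem_insert_of_mem h₁), hy (mem_insert_of_mem h₂)]
  obtain ⟨K₂, hK₂, hj₂⟩ := D.exists_isClosed_center_mem j
  have h₁ := hK₁.three_le_card hi
  have h₂ := (hK₂.sdiff hK₁).three_le_card (mem_sdiff.2 ⟨hj₂, hj₁⟩)
  have h₁₂ := (hK₁.union (hK₂.sdiff hK₁)).card_le_four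
  rw [card_union_of_disjoint disjoint_sdiff] at h₁₂
  omega

noncomputable def ofIsFactorizationSet {𝒢 : Set (SimpleGraph V)}
    (h𝒢 : IsFactorizationSet ⊤ 𝒢) (hstar : ∀ Γ ∈ 𝒢, ∃ a b, Γ.IsDoubleStar a b) :
    DoubleStarFactorization V 𝒢 where
  graph := Subtype.val
  center₁ Γ := (hstar Γ Γ.2).choose
  center₂ Γ := (hstar Γ Γ.2).choose_spec.choose
  isDoubleStar Γ := (hstar Γ Γ.2).choose_spec.choose_spec
  existsUnique_adj u v huv := by
    obtain ⟨Γ, ⟨hΓ, huvΓ⟩, huniq⟩ := h𝒢.2 s(u, v) huv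
    exact ⟨⟨Γ, hΓ⟩, huvΓ, fun Γ' hΓ' => Subtype.ext (huniq Γ' ⟨Γ'.2, hΓ'⟩)⟩

end DoubleStarFactorization

/-- there is no factorization of the complete graph `K_ℕ` into
factors each isomorphic to the `2`-star `S₂`, i.e. `FP(S₂)` has no solution. -/
theorem stmt_14 :
    ¬ ∃ 𝒢 : Set (SimpleGraph ℕ), IsFactorizationSet (⊤ : SimpleGraph ℕ) 𝒢 ∧
        ∀ Γ ∈ 𝒢, Nonempty (kStar 2 ≃g Γ) := by
  rintro ⟨𝒢, h𝒢, hiso⟩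
  refine DoubleStarFactorization.isEmpty_of_infinite.false
    (DoubleStarFactorization.ofIsFactorizationSet h𝒢 fun Γ hΓ => ?_)
  obtain ⟨e⟩ := hiso Γ hΓ
  exact ⟨_, _, kStar_two_isDoubleStar.map e⟩
end

section
/- For every integer k ≥ 4, there exists a graph Γ with vertex set V = ℤ × {0, 1} that is isomorphic to the k-star S_k and such that Orb_ℤ(Γ) = {Γ + d : d ∈ ℤ} is a factorization of the complete graph K_V into factors each isomorphic to S_k. -/
/-- The graphTranslate `Γ + d` of a graph `Γ` on `ℤ × {0, …, m-1}`: each vertex `(x, i)`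
is replaced by `(x + d, i)`. -/
def graphTranslate {m : ℕ} (d : ℤ) (Γ : SimpleGraph (ℤ × Fin m)) : SimpleGraph (ℤ × Fin m) :=
  SimpleGraph.comap (fun p => (p.1 - d, p.2)) Γ

/-- The `ℤ`-orbit `Orb_ℤ(Γ) = {Γ + d : d ∈ ℤ}` of a graph `Γ` on `ℤ × {0, …, m-1}`. -/
def zOrbit {m : ℕ} (Γ : SimpleGraph (ℤ × Fin m)) : Set (SimpleGraph (ℤ × Fin m)) :=
  {Γ' | ∃ d : ℤ, Γ' = graphTranslate d Γ}

def sA (δ : ℤ) : ℤ := if δ % 8 = 1 ∨ δ % 8 = 2 ∨ δ % 8 = 3 then 0 else -δ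

def sC (r δ : ℤ) : ℤ :=
  if δ % 8 = 1 ∨ δ % 8 = 2 ∨ δ % 8 = 3 then 8*r*((δ/8) % r) - δ
  else if δ % 8 = 4 then (if 0 < δ then 0 else -δ)
  else if δ % 8 = 0 then
    (if δ = 0 then 8*r*r
     else if 0 < δ then (if δ % (8*r) = 0 then 8*r*r else 0)
     else (if δ % (8*r) = 0 ∧ δ ≤ -(8*r*r) then 8*r - δ else -δ))
  else 0

def myrel (r : ℤ) (u v : ℤ × Fin 2) : Prop :=
  (u.2 = 0 ∧ v.2 = 0 ∧ u.1 < v.1 ∧ u.1 = sA (v.1 - u.1)) ∨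
  (u.2 = 1 ∧ v.2 = 1 ∧ u.1 < v.1 ∧ u.1 = sA (v.1 - u.1)) ∨
  (u.2 = 0 ∧ v.2 = 1 ∧ u.1 = sC r (v.1 - u.1))

def Gam (r : ℤ) : SimpleGraph (ℤ × Fin 2) := SimpleGraph.fromRel (myrel r)

def ctr (r : ℤ) (v : ℤ × Fin 2) : Prop :=
  (v.2 = 0 ∧ (v.1 = 0 ∨ v.1 = 8*r*r)) ∨ (v.2 = 1 ∧ ∃ j, 0 ≤ j ∧ j < r ∧ v.1 = 8*r*j)

lemma adj00 (r m y : ℤ) :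
    (Gam r).Adj (m, 0) (y, 0) ↔ m ≠ y ∧ ((m < y ∧ m = sA (y - m)) ∨ (y < m ∧ y = sA (m - y))) := by
  simp [Gam, SimpleGraph.fromRel_adj, myrel, Prod.ext_iff, and_comm]

lemma adj11 (r m y : ℤ) :
    (Gam r).Adj (m, 1) (y, 1) ↔ m ≠ y ∧ ((m < y ∧ m = sA (y - m)) ∨ (y < m ∧ y = sA (m - y))) := by
  simp [Gam, SimpleGraph.fromRel_adj, myrel, Prod.ext_iff, and_comm]

lemma adj01 (r m y : ℤ) : (Gam r).Adj (m, 0) (y, 1) ↔ m = sC r (y - m) := by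
  simp [Gam, SimpleGraph.fromRel_adj, myrel, Prod.ext_iff]

lemma adj10 (r m y : ℤ) : (Gam r).Adj (m, 1) (y, 0) ↔ y = sC r (m - y) := by
  simp [Gam, SimpleGraph.fromRel_adj, myrel, Prod.ext_iff]

lemma sA_nbr (m y : ℤ) (hm : m ≠ 0) :
    ((m < y ∧ m = sA (y - m)) ∨ (y < m ∧ y = sA (m - y))) ↔
      (y = 0 ∧ ((0 < m ∧ (m % 8 = 1 ∨ m % 8 = 2 ∨ m % 8 = 3)) ∨
        (m < 0 ∧ (m % 8 = 0 ∨ m % 8 = 1 ∨ m % 8 = 2 ∨ m % 8 = 3 ∨ m % 8 = 4)))) := by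
  unfold sA
  constructor
  · rintro (⟨h1, h2⟩ | ⟨h1, h2⟩) <;> split_ifs at h2 <;> omega
  · rintro ⟨rfl, (⟨h1, h2⟩ | ⟨h1, h2⟩)⟩
    · right; refine ⟨h1, ?_⟩; split_ifs <;> omega
    · left; refine ⟨h1, ?_⟩; split_ifs <;> omega

lemma dvd_emod_zero {a b : ℤ} (h : b ∣ a) : a % b = 0 := Int.dvd_iff_emod_eq_zero.mp h

lemma emod_zero_dvd {a b : ℤ} (h : a % b = 0) : b ∣ a := Int.dvd_iff_emod_eq_zero.mpr h

lemma sCI_123 (r δ m : ℤ) (hm : m % 8 = 1 ∨ m % 8 = 2 ∨ m % 8 = 3) : sC r δ ≠ m := by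
  obtain ⟨t1, ht1⟩ : ∃ t, 8*r*((δ/8) % r) = 8*t := ⟨r*((δ/8) % r), by ring⟩
  obtain ⟨t2, ht2⟩ : ∃ t, 8*r*r = 8*t := ⟨r*r, by ring⟩
  obtain ⟨t3, ht3⟩ : ∃ t, 8*r = 8*t := ⟨r, by ring⟩
  unfold sC; split_ifs <;> omega

lemma sCI_4 (r δ m : ℤ) (hm : m % 8 = 4) (h0 : m ≠ 0) : sC r δ = m ↔ (0 < m ∧ δ = -m) := by
  obtain ⟨t1, ht1⟩ : ∃ t, 8*r*((δ/8) % r) = 8*t := ⟨r*((δ/8) % r), by ring⟩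
  obtain ⟨t2, ht2⟩ : ∃ t, 8*r*r = 8*t := ⟨r*r, by ring⟩
  obtain ⟨t3, ht3⟩ : ∃ t, 8*r = 8*t := ⟨r, by ring⟩
  unfold sC; split_ifs <;> omega

lemma sCII_123 (r δ m : ℤ) (hm : m % 8 = 1 ∨ m % 8 = 2 ∨ m % 8 = 3) : sC r δ + δ ≠ m := by
  obtain ⟨t1, ht1⟩ : ∃ t, 8*r*((δ/8) % r) = 8*t := ⟨r*((δ/8) % r), by ring⟩
  obtain ⟨t2, ht2⟩ : ∃ t, 8*r*r = 8*t := ⟨r*r, by ring⟩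
  obtain ⟨t3, ht3⟩ : ∃ t, 8*r = 8*t := ⟨r, by ring⟩
  unfold sC; split_ifs <;> omega

lemma sCII_567 (r δ m : ℤ) (hm : m % 8 = 5 ∨ m % 8 = 6 ∨ m % 8 = 7) :
    sC r δ + δ = m ↔ δ = m := by
  obtain ⟨t1, ht1⟩ : ∃ t, 8*r*((δ/8) % r) = 8*t := ⟨r*((δ/8) % r), by ring⟩
  obtain ⟨t2, ht2⟩ : ∃ t, 8*r*r = 8*t := ⟨r*r, by ring⟩
  obtain ⟨t3, ht3⟩ : ∃ t, 8*r = 8*t := ⟨r, by ring⟩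
  unfold sC; split_ifs <;> omega

lemma sCII_4 (r δ m : ℤ) (hm : m % 8 = 4) (h0 : m ≠ 0) :
    sC r δ + δ = m ↔ (0 < m ∧ δ = m) := by
  obtain ⟨t1, ht1⟩ : ∃ t, 8*r*((δ/8) % r) = 8*t := ⟨r*((δ/8) % r), by ring⟩
  obtain ⟨t2, ht2⟩ : ∃ t, 8*r*r = 8*t := ⟨r*r, by ring⟩
  obtain ⟨t3, ht3⟩ : ∃ t, 8*r = 8*t := ⟨r, by ring⟩
  unfold sC; split_ifs <;> omega

lemma sCI_567 (r δ m : ℤ) (hr : 2 ≤ r) (hm : m % 8 = 5 ∨ m % 8 = 6 ∨ m % 8 = 7) :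
    sC r δ = m ↔ m + δ = 8*r*((-((m + (8 - m % 8)) / 8)) % r) := by
  set c : ℤ := 8 - m % 8 with hc
  set u : ℤ := (m + c) / 8 with hu
  have hdiv : 8 * u = m + c := by
    have := Int.mul_ediv_add_emod (m + c) 8
    omega
  set i : ℤ := (-u) % r with hi
  have hrpos : (0:ℤ) < r := by omega
  have hi0 : 0 ≤ i := Int.emod_nonneg _ (by omega)
  have hir : i < r := Int.emod_lt_of_pos _ hrpos
  obtain ⟨I, hI⟩ : ∃ I, r * i = I := ⟨_, rfl⟩
  have h8I : (8*r*i : ℤ) = 8*I := by rw [← hI]; ring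
  constructor
  · intro h
    obtain ⟨t2, ht2⟩ : ∃ t, 8*r*r = 8*t := ⟨r*r, by ring⟩
    obtain ⟨t3, ht3⟩ : ∃ t, 8*r = 8*t := ⟨r, by ring⟩
    unfold sC at h
    split_ifs at h with h1 h2 h3 h4 h5 h6 h7 <;> try omega
    -- main branch: h1 : δ%8 ∈ {1,2,3}, h : 8*r*((δ/8)%r) - δ = m
    · set v : ℤ := δ / 8 with hv
      have hvd : 8 * v + δ % 8 = δ := by have := Int.mul_ediv_add_emod δ 8; omega
      set w : ℤ := v % r with hw
      obtain ⟨W, hW⟩ : ∃ W, r * w = W := ⟨_, rfl⟩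
      have hWe : 8*W - δ = m := by rw [← hW]; linarith [h]
      have hδ8 : δ % 8 = c := by omega
      have hnegu : -u = v + r * (-w) := by
        have h1 : u = W - v := by omega
        rw [h1, ← hW]; ring
      have hiw : i = w := by rw [hi, hnegu, Int.add_mul_emod_self_left, hw]
      have hgoal : (8*r*i : ℤ) = 8*W := by rw [hiw, ← hW]; ring
      omega
  · intro h
    have h' : m + δ = 8*I := by omega
    have hδ : δ = 8*(I - u) + c := by omega
    have hδ8 : δ % 8 = c := by omega
    have hdiv8 : δ / 8 = I - u := by
      have h1 : δ = c + (I - u)*8 := by omega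
      have h2 : c / 8 = 0 := Int.ediv_eq_zero_of_lt (by omega) (by omega)
      rw [h1, Int.add_mul_ediv_right _ _ (by norm_num : (8:ℤ) ≠ 0)]
      omega
    have h2 : I - u = -u + r * i := by rw [← hI]; ring
    have hmod : (δ/8) % r = i :=
      calc (δ/8) % r = (-u + r*i) % r := by rw [hdiv8, h2]
        _ = (-u) % r := Int.add_mul_emod_self_left (-u) r i
        _ = i := hi.symm
    unfold sC
    split_ifs with hb1 hb2 hb3
    · rw [hmod]; omega
    all_goals omega

lemma sCI_0 (r δ m : ℤ) (hr : 2 ≤ r) (hm : m % 8 = 0) (h0 : m ≠ 0) (h1 : m ≠ 8*r*r) :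
    sC r δ = m ↔
      ((8*r ∣ m ∧ 8*r*r < m) ∧ δ = 8*r - m) ∨ (¬(8*r ∣ m ∧ 8*r*r < m) ∧ 0 < m ∧ δ = -m) := by
  have h8r : (0:ℤ) < 8*r := by omega
  have hrr : (0:ℤ) < 8*r*r := by positivity
  constructor
  · intro h
    obtain ⟨t1, ht1⟩ : ∃ t, 8*r*((δ/8) % r) = 8*t := ⟨r*((δ/8) % r), by ring⟩
    unfold sC at h
    split_ifs at h with hb1 hb2 hb3 hb4 hb5 hb6 hb7 hb8 <;> try omega
    · -- negQ1 branch: h : 8*r - δ = m, hb8 : δ % (8*r) = 0 ∧ δ ≤ -(8*r*r)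
      left
      have hdδ : (8*r) ∣ δ := emod_zero_dvd hb8.1
      have hdm : (8*r) ∣ m := by
        rw [← h]; exact dvd_sub (dvd_refl _) hdδ
      exact ⟨⟨hdm, by omega⟩, by omega⟩
    · -- negelse: h : -δ = m
      right
      refine ⟨?_, by omega, by omega⟩
      rintro ⟨hdm, hlt⟩
      apply hb8
      have hδ : δ = -m := by omega
      constructor
      · rw [hδ]; exact dvd_emod_zero (dvd_neg.mpr hdm)
      · omega
  · rintro (⟨⟨hdm, hlt⟩, rfl⟩ | ⟨hnd, hpos, rfl⟩)
    · have hge : 8*r*r + 8*r ≤ m := by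
        obtain ⟨a, ha⟩ := hdm
        have har : r < a := by nlinarith
        nlinarith
      have hδd : (8*r) ∣ (8*r - m) := dvd_sub (dvd_refl _) hdm
      have hδm : (8*r - m) % (8*r) = 0 := dvd_emod_zero hδd
      have hδ8 : (8*r - m) % 8 = 0 := by
        obtain ⟨a, ha⟩ := hδd
        obtain ⟨t, ht⟩ : ∃ t, (8*r)*a = 8*t := ⟨r*a, by ring⟩
        omega
      unfold sC
      split_ifs with hb1 hb2 hb3 hb4 hb5 hb6 hb7 hb8 <;>
        first
          | omega
          | exact absurd ⟨hδm, by omega⟩ hb8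
    · have hδ8 : (-m) % 8 = 0 := by omega
      have hnb : ¬((-m) % (8*r) = 0 ∧ -m ≤ -(8*r*r)) := by
        rintro ⟨ha, hb⟩
        exact hnd ⟨dvd_neg.mp (emod_zero_dvd ha), by omega⟩
      unfold sC
      split_ifs with hb1 hb2 hb3 hb4 hb5 hb6 hb7 hb8 <;>
        first
          | omega
          | exact absurd hb8 hnb

lemma ctr1_iff (r m : ℤ) (hr : 2 ≤ r) :
    (∃ j, 0 ≤ j ∧ j < r ∧ m = 8*r*j) ↔ (8*r ∣ m ∧ 0 ≤ m ∧ m < 8*r*r) := by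
  have h8r : (0:ℤ) < 8*r := by omega
  constructor
  · rintro ⟨j, hj0, hjr, rfl⟩
    refine ⟨⟨j, by ring⟩, by positivity, ?_⟩
    have := mul_lt_mul_of_pos_left hjr h8r
    nlinarith
  · rintro ⟨⟨a, ha⟩, h0, h1⟩
    refine ⟨a, ?_, ?_, ha⟩
    · by_contra hc
      push_neg at hc
      nlinarith
    · by_contra hc
      push_neg at hc
      nlinarith

lemma sCII_0 (r δ m : ℤ) (hr : 2 ≤ r) (hm : m % 8 = 0) (h0 : m ≠ 0)
    (hnc : ¬(8*r ∣ m ∧ 0 ≤ m ∧ m < 8*r*r)) :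
    sC r δ + δ = m ↔
      ((8*r ∣ m ∧ 8*r*r ≤ m) ∧ δ = m - 8*r*r) ∨ (¬(8*r ∣ m) ∧ 0 < m ∧ δ = m) := by
  have h8r : (0:ℤ) < 8*r := by omega
  have hrr : (0:ℤ) < 8*r*r := by positivity
  have hrrd : (8*r) ∣ 8*r*r := ⟨r, by ring⟩
  constructor
  · intro h
    unfold sC at h
    split_ifs at h with hb1 hb2 hb3 hb4 hb5 hb6 hb7 hb8 <;> try omega
    · -- c123 : h : 8*r*((δ/8)%r) - δ + δ = m
      exfalso
      set t := (δ/8) % r with htdef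
      have ht0 : 0 ≤ t := Int.emod_nonneg _ (by omega)
      have htr : t < r := Int.emod_lt_of_pos _ (by omega)
      have hmt : m = 8*r*t := by linarith [h]
      exact hnc ⟨⟨t, hmt⟩, by nlinarith, by nlinarith⟩
    · -- δ = 0 : h : 8*r*r + 0 = m
      left
      exact ⟨⟨by rw [← h, hb5, add_zero]; exact hrrd, by omega⟩, by omega⟩
    · -- posdvd : h : 8*r*r + δ = m, hb7 : δ % (8*r) = 0
      left
      have hdδ : (8*r) ∣ δ := emod_zero_dvd hb7
      exact ⟨⟨by rw [← h]; exact dvd_add hrrd hdδ, by omega⟩, by omega⟩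
    · -- poselse : h : 0 + δ = m, hb7 : ¬ δ % (8*r) = 0
      right
      refine ⟨fun hdm => hb7 ?_, by omega, by omega⟩
      have hδm : δ = m := by omega
      rw [hδm]
      exact dvd_emod_zero hdm
    · -- negQ1 : h : 8*r - δ + δ = m  → m = 8*r : center, contradiction
      exfalso
      exact hnc ⟨⟨1, by omega⟩, by omega, by nlinarith⟩
  · rintro (⟨⟨hdm, hle⟩, hδ⟩ | ⟨hnd, hpos, hδ⟩) <;> rw [hδ]
    · have hδ8 : (m - 8*r*r) % 8 = 0 := by
        obtain ⟨a, ha⟩ := hdm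
        obtain ⟨t, ht⟩ : ∃ t, (8*r)*a = 8*t := ⟨r*a, by ring⟩
        obtain ⟨s, hs⟩ : ∃ s, 8*r*r = 8*s := ⟨r*r, by ring⟩
        omega
      have hδd : (m - 8*r*r) % (8*r) = 0 := dvd_emod_zero (dvd_sub hdm hrrd)
      unfold sC
      split_ifs with hb1 hb2 hb3 hb4 hb5 hb6 hb7 hb8 <;> omega
    · have hδ8 : m % 8 = 0 := hm
      have hδd : ¬ (m % (8*r) = 0) := fun hc => hnd (emod_zero_dvd hc)
      unfold sC
      split_ifs with hb1 hb2 hb3 hb4 hb5 hb6 hb7 hb8 <;> try omega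
lemma fin2_cases (l : Fin 2) : l = 0 ∨ l = 1 := by
  fin_cases l
  · exact Or.inl rfl
  · exact Or.inr rfl

lemma uniq0 (r m : ℤ) (hr : 2 ≤ r) (h0 : m ≠ 0) (h1 : m ≠ 8*r*r) :
    ∃ c, ctr r c ∧ ∀ w, (Gam r).Adj (m, 0) w ↔ w = c := by
  have hrr : (0:ℤ) < 8*r*r := by positivity
  have h8 : m % 8 = 0 ∨ m % 8 = 1 ∨ m % 8 = 2 ∨ m % 8 = 3 ∨ m % 8 = 4 ∨
      m % 8 = 5 ∨ m % 8 = 6 ∨ m % 8 = 7 := by omega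
  by_cases hm123 : m % 8 = 1 ∨ m % 8 = 2 ∨ m % 8 = 3
  · -- class 1,2,3 : neighbor (0,0)
    refine ⟨((0:ℤ), (0:Fin 2)), Or.inl ⟨rfl, Or.inl rfl⟩, ?_⟩
    rintro ⟨y, l⟩
    rcases fin2_cases l with rfl | rfl
    · rw [adj00, sA_nbr m y h0]
      simp only [Prod.mk.injEq, and_true]
      constructor
      · rintro ⟨hne, rfl, _⟩; rfl
      · rintro rfl
        exact ⟨by omega, rfl, by omega⟩
    · rw [adj01]
      simp only [Prod.mk.injEq]
      constructor
      · intro h; exact absurd h.symm (sCI_123 r (y - m) m hm123)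
      · rintro ⟨_, h⟩; exact absurd h (by decide)
  by_cases hm567 : m % 8 = 5 ∨ m % 8 = 6 ∨ m % 8 = 7
  · -- class 5,6,7 : neighbor (8r·i, 1)
    set i : ℤ := (-((m + (8 - m % 8)) / 8)) % r with hi
    have hi0 : 0 ≤ i := Int.emod_nonneg _ (by omega)
    have hir : i < r := Int.emod_lt_of_pos _ (by omega)
    refine ⟨(8*r*i, (1:Fin 2)), Or.inr ⟨rfl, ⟨i, hi0, hir, rfl⟩⟩, ?_⟩
    rintro ⟨y, l⟩
    rcases fin2_cases l with rfl | rfl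
    · rw [adj00, sA_nbr m y h0]
      simp only [Prod.mk.injEq]
      constructor
      · rintro ⟨_, _, h⟩; omega
      · rintro ⟨_, h⟩; exact absurd h (by decide)
    · rw [adj01, eq_comm, sCI_567 r (y - m) m hr hm567]
      simp only [Prod.mk.injEq, and_true]
      have hfold : 8*r*((-((m + (8 - m % 8)) / 8)) % r) = 8*r*i := by rw [hi]
      omega
  by_cases hm4 : m % 8 = 4
  · by_cases hmp : 0 < m
    · -- class 4 positive : neighbor (0,1)
      refine ⟨((0:ℤ), (1:Fin 2)), Or.inr ⟨rfl, ⟨0, le_refl _, by omega, by ring⟩⟩, ?_⟩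
      rintro ⟨y, l⟩
      rcases fin2_cases l with rfl | rfl
      · rw [adj00, sA_nbr m y h0]
        simp only [Prod.mk.injEq]
        constructor
        · rintro ⟨_, _, h⟩; omega
        · rintro ⟨_, h⟩; exact absurd h (by decide)
      · rw [adj01, eq_comm, sCI_4 r (y - m) m hm4 h0]
        simp only [Prod.mk.injEq, and_true]
        omega
    · -- class 4 negative : neighbor (0,0)
      refine ⟨((0:ℤ), (0:Fin 2)), Or.inl ⟨rfl, Or.inl rfl⟩, ?_⟩
      rintro ⟨y, l⟩
      rcases fin2_cases l with rfl | rfl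
      · rw [adj00, sA_nbr m y h0]
        simp only [Prod.mk.injEq, and_true]
        omega
      · rw [adj01, eq_comm, sCI_4 r (y - m) m hm4 h0]
        simp only [Prod.mk.injEq]
        constructor
        · rintro ⟨h, _⟩; omega
        · rintro ⟨_, h⟩; exact absurd h (by decide)
  · -- class 0
    have hm0 : m % 8 = 0 := by omega
    by_cases hmp : 0 < m
    · by_cases hq : 8*r ∣ m ∧ 8*r*r < m
      · -- neighbor (8r, 1)
        refine ⟨(8*r*1, (1:Fin 2)), Or.inr ⟨rfl, ⟨1, by omega, by omega, rfl⟩⟩, ?_⟩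
        rintro ⟨y, l⟩
        rcases fin2_cases l with rfl | rfl
        · rw [adj00, sA_nbr m y h0]
          simp only [Prod.mk.injEq]
          constructor
          · rintro ⟨_, _, h⟩; omega
          · rintro ⟨_, h⟩; exact absurd h (by decide)
        · rw [adj01, eq_comm, sCI_0 r (y - m) m hr hm0 h0 h1]
          simp only [Prod.mk.injEq, and_true]
          constructor
          · rintro (⟨_, h⟩ | ⟨hn, _⟩)
            · omega
            · exact absurd hq hn
          · intro h; exact Or.inl ⟨hq, by omega⟩
      · -- neighbor (0,1)
        refine ⟨((0:ℤ), (1:Fin 2)), Or.inr ⟨rfl, ⟨0, le_refl _, by omega, by ring⟩⟩, ?_⟩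
        rintro ⟨y, l⟩
        rcases fin2_cases l with rfl | rfl
        · rw [adj00, sA_nbr m y h0]
          simp only [Prod.mk.injEq]
          constructor
          · rintro ⟨_, _, h⟩; omega
          · rintro ⟨_, h⟩; exact absurd h (by decide)
        · rw [adj01, eq_comm, sCI_0 r (y - m) m hr hm0 h0 h1]
          simp only [Prod.mk.injEq, and_true]
          constructor
          · rintro (⟨h, _⟩ | ⟨_, _, h⟩)
            · exact absurd h hq
            · omega
          · intro h; exact Or.inr ⟨hq, hmp, by omega⟩
    · -- class 0 negative : neighbor (0,0)
      refine ⟨((0:ℤ), (0:Fin 2)), Or.inl ⟨rfl, Or.inl rfl⟩, ?_⟩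
      rintro ⟨y, l⟩
      rcases fin2_cases l with rfl | rfl
      · rw [adj00, sA_nbr m y h0]
        simp only [Prod.mk.injEq, and_true]
        omega
      · rw [adj01, eq_comm, sCI_0 r (y - m) m hr hm0 h0 h1]
        simp only [Prod.mk.injEq]
        constructor
        · rintro (⟨⟨_, h⟩, _⟩ | ⟨_, h, _⟩)
          · omega
          · omega
        · rintro ⟨_, h⟩; exact absurd h (by decide)
lemma uniq1 (r m : ℤ) (hr : 2 ≤ r) (hnc : ¬(8*r ∣ m ∧ 0 ≤ m ∧ m < 8*r*r)) :
    ∃ c, ctr r c ∧ ∀ w, (Gam r).Adj (m, 1) w ↔ w = c := by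
  have hrr : (0:ℤ) < 8*r*r := by positivity
  have h0 : m ≠ 0 := by
    rintro rfl; exact hnc ⟨dvd_zero _, le_refl _, hrr⟩
  have key : ∀ y : ℤ, (y = sC r (m - y)) ↔ (sC r (m - y) + (m - y) = m) := by
    intro y; constructor <;> intro h <;> omega
  by_cases hm123 : m % 8 = 1 ∨ m % 8 = 2 ∨ m % 8 = 3
  · refine ⟨((0:ℤ), (1:Fin 2)), Or.inr ⟨rfl, ⟨0, le_refl _, by omega, by ring⟩⟩, ?_⟩
    rintro ⟨y, l⟩
    rcases fin2_cases l with rfl | rfl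
    · rw [adj10, key y]
      simp only [Prod.mk.injEq]
      constructor
      · intro h; exact absurd h (sCII_123 r (m - y) m hm123)
      · rintro ⟨_, h⟩; exact absurd h (by decide)
    · rw [adj11, sA_nbr m y h0]
      simp only [Prod.mk.injEq, and_true]
      constructor
      · rintro ⟨hne, rfl, _⟩; rfl
      · rintro rfl
        exact ⟨by omega, rfl, by omega⟩
  by_cases hm567 : m % 8 = 5 ∨ m % 8 = 6 ∨ m % 8 = 7
  · refine ⟨((0:ℤ), (0:Fin 2)), Or.inl ⟨rfl, Or.inl rfl⟩, ?_⟩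
    rintro ⟨y, l⟩
    rcases fin2_cases l with rfl | rfl
    · rw [adj10, key y, sCII_567 r (m - y) m hm567]
      simp only [Prod.mk.injEq, and_true]
      omega
    · rw [adj11, sA_nbr m y h0]
      simp only [Prod.mk.injEq]
      constructor
      · rintro ⟨_, _, h⟩; omega
      · rintro ⟨_, h⟩; exact absurd h (by decide)
  by_cases hm4 : m % 8 = 4
  · by_cases hmp : 0 < m
    · refine ⟨((0:ℤ), (0:Fin 2)), Or.inl ⟨rfl, Or.inl rfl⟩, ?_⟩
      rintro ⟨y, l⟩
      rcases fin2_cases l with rfl | rfl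
      · rw [adj10, key y, sCII_4 r (m - y) m hm4 h0]
        simp only [Prod.mk.injEq, and_true]
        omega
      · rw [adj11, sA_nbr m y h0]
        simp only [Prod.mk.injEq]
        constructor
        · rintro ⟨_, _, h⟩; omega
        · rintro ⟨_, h⟩; exact absurd h (by decide)
    · refine ⟨((0:ℤ), (1:Fin 2)), Or.inr ⟨rfl, ⟨0, le_refl _, by omega, by ring⟩⟩, ?_⟩
      rintro ⟨y, l⟩
      rcases fin2_cases l with rfl | rfl
      · rw [adj10, key y, sCII_4 r (m - y) m hm4 h0]
        simp only [Prod.mk.injEq]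
        constructor
        · rintro ⟨h, _⟩; omega
        · rintro ⟨_, h⟩; exact absurd h (by decide)
      · rw [adj11, sA_nbr m y h0]
        simp only [Prod.mk.injEq, and_true]
        omega
  · have hm0 : m % 8 = 0 := by omega
    by_cases hmp : 0 < m
    · by_cases hdv : 8*r ∣ m
      · have hge : 8*r*r ≤ m := by
          by_contra hc
          exact hnc ⟨hdv, by omega, by omega⟩
        refine ⟨(8*r*r, (0:Fin 2)), Or.inl ⟨rfl, Or.inr rfl⟩, ?_⟩
        rintro ⟨y, l⟩
        rcases fin2_cases l with rfl | rfl
        · rw [adj10, key y, sCII_0 r (m - y) m hr hm0 h0 hnc]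
          simp only [Prod.mk.injEq, and_true]
          constructor
          · rintro (⟨_, h⟩ | ⟨hn, _⟩)
            · omega
            · exact absurd hdv hn
          · intro h; exact Or.inl ⟨⟨hdv, hge⟩, by omega⟩
        · rw [adj11, sA_nbr m y h0]
          simp only [Prod.mk.injEq]
          constructor
          · rintro ⟨_, _, h⟩; omega
          · rintro ⟨_, h⟩; exact absurd h (by decide)
      · refine ⟨((0:ℤ), (0:Fin 2)), Or.inl ⟨rfl, Or.inl rfl⟩, ?_⟩
        rintro ⟨y, l⟩
        rcases fin2_cases l with rfl | rfl
        · rw [adj10, key y, sCII_0 r (m - y) m hr hm0 h0 hnc]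
          simp only [Prod.mk.injEq, and_true]
          constructor
          · rintro (⟨⟨h, _⟩, _⟩ | ⟨_, _, h⟩)
            · exact absurd h hdv
            · omega
          · intro h; exact Or.inr ⟨hdv, hmp, by omega⟩
        · rw [adj11, sA_nbr m y h0]
          simp only [Prod.mk.injEq]
          constructor
          · rintro ⟨_, _, h⟩; omega
          · rintro ⟨_, h⟩; exact absurd h (by decide)
    · refine ⟨((0:ℤ), (1:Fin 2)), Or.inr ⟨rfl, ⟨0, le_refl _, by omega, by ring⟩⟩, ?_⟩
      rintro ⟨y, l⟩
      rcases fin2_cases l with rfl | rfl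
      · rw [adj10, key y, sCII_0 r (m - y) m hr hm0 h0 hnc]
        simp only [Prod.mk.injEq]
        constructor
        · rintro (⟨⟨_, h⟩, _⟩ | ⟨_, h, _⟩)
          · omega
          · omega
        · rintro ⟨_, h⟩; exact absurd h (by decide)
      · rw [adj11, sA_nbr m y h0]
        simp only [Prod.mk.injEq, and_true]
        omega
lemma sC_core (r : ℤ) (hr : 2 ≤ r) (j y : ℤ) (hj0 : 0 ≤ j) (hjr : j < r)
    (hy : y = 0 ∨ y = 8*r*r) : sC r (8*r*j - y) ≠ y := by
  have hrr : (0:ℤ) < 8*r*r := by positivity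
  have ht0 : 0 ≤ 8*r*j := mul_nonneg (by omega) hj0
  have htlt : 8*r*j + 8*r ≤ 8*r*r := by nlinarith
  have hδd : (8*r*j - y) % (8*r) = 0 := by
    apply dvd_emod_zero
    rcases hy with rfl | rfl
    · exact ⟨j, by ring⟩
    · exact ⟨j - r, by ring⟩
  obtain ⟨t, ht⟩ : ∃ t, 8*r*j = 8*t := ⟨r*j, by ring⟩
  obtain ⟨s, hs⟩ : ∃ s, 8*r*r = 8*s := ⟨r*r, by ring⟩
  obtain ⟨t1, ht1⟩ : ∃ t1, 8*r*(((8*r*j - y)/8) % r) = 8*t1 :=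
    ⟨r*(((8*r*j - y)/8) % r), by ring⟩
  intro h
  unfold sC at h
  rcases hy with rfl | rfl <;> split_ifs at h <;> omega

lemma nocc (r : ℤ) (hr : 2 ≤ r) (c c' : ℤ × Fin 2) (hc : ctr r c) (hc' : ctr r c') :
    ¬ (Gam r).Adj c c' := by
  have hrr : (0:ℤ) < 8*r*r := by positivity
  obtain ⟨a, la⟩ := c
  obtain ⟨b, lb⟩ := c'
  rcases hc with ⟨hla, ha⟩ | ⟨hla, j, hj0, hjr, hja⟩ <;>
    rcases hc' with ⟨hlb, hb⟩ | ⟨hlb, j', hj0', hjr', hjb⟩ <;>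
      simp only at hla hlb <;> subst hla <;> subst hlb
  · -- both level 0
    intro h
    rw [adj00] at h
    obtain ⟨hne, hd⟩ := h
    obtain ⟨s, hs⟩ : ∃ s, 8*r*r = 8*s := ⟨r*r, by ring⟩
    rcases hd with ⟨h1, h2⟩ | ⟨h1, h2⟩ <;> unfold sA at h2 <;> split_ifs at h2 <;>
      rcases ha with rfl | rfl <;> rcases hb with rfl | rfl <;> omega
  · -- level 0, level 1
    subst hjb
    intro h
    rw [adj01] at h
    exact sC_core r hr j' a hj0' hjr' ha h.symm
  · -- level 1, level 0
    subst hja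
    intro h
    rw [adj10] at h
    exact sC_core r hr j b hj0 hjr hb h.symm
  · -- both level 1
    subst hja; subst hjb
    intro h
    rw [adj11] at h
    obtain ⟨hne, hd⟩ := h
    obtain ⟨t, ht⟩ : ∃ t, 8*r*j = 8*t := ⟨r*j, by ring⟩
    obtain ⟨t', ht'⟩ : ∃ t, 8*r*j' = 8*t := ⟨r*j', by ring⟩
    have h1 : 0 ≤ 8*r*j := mul_nonneg (by omega) hj0
    have h2 : 0 ≤ 8*r*j' := mul_nonneg (by omega) hj0'
    rcases hd with ⟨hlt, he⟩ | ⟨hlt, he⟩ <;> unfold sA at he <;> split_ifs at he <;> omega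
lemma inf_nbr (r : ℤ) (hr : 2 ≤ r) (c : ℤ × Fin 2) (hc : ctr r c) :
    ((Gam r).neighborSet c).Infinite := by
  have hrr : (0:ℤ) < 8*r*r := by positivity
  obtain ⟨a, la⟩ := c
  rcases hc with ⟨hla, ha⟩ | ⟨hla, j, hj0, hjr, hja⟩
  · simp only at hla; subst hla
    rcases ha with rfl | rfl
    · -- center (0,0): neighbors (8n+1, 0)
      apply Set.infinite_of_injective_forall_mem
        (f := fun n : ℕ => ((8*(n:ℤ)+1, (0:Fin 2)) : ℤ × Fin 2))
      · intro n1 n2 h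
        simp only [Prod.mk.injEq] at h
        omega
      · intro n
        rw [SimpleGraph.mem_neighborSet, adj00]
        refine ⟨by omega, Or.inl ⟨by omega, ?_⟩⟩
        unfold sA
        split_ifs with hb
        · rfl
        · exfalso; apply hb; omega
    · -- center (8rr,0): neighbors (8rr + 8r(n+1), 1)
      apply Set.infinite_of_injective_forall_mem
        (f := fun n : ℕ => ((8*r*r + 8*r*((n:ℤ)+1), (1:Fin 2)) : ℤ × Fin 2))
      · intro n1 n2 h
        simp only [Prod.mk.injEq] at h
        have h1 : (8*r) * ((n1:ℤ)+1) = (8*r) * ((n2:ℤ)+1) := by linarith [h.1]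
        have h2 : ((n1:ℤ)+1) = ((n2:ℤ)+1) := mul_left_cancel₀ (by omega) h1
        omega
      · intro n
        rw [SimpleGraph.mem_neighborSet, adj01]
        have hδd : (8*r*r + 8*r*((n:ℤ)+1) - 8*r*r) % (8*r) = 0 :=
          dvd_emod_zero ⟨(n:ℤ)+1, by ring⟩
        have hδpos : 0 < 8*r*((n:ℤ)+1) := by
          have : (0:ℤ) < (n:ℤ)+1 := by omega
          positivity
        obtain ⟨t, ht⟩ : ∃ t, 8*r*((n:ℤ)+1) = 8*t := ⟨r*((n:ℤ)+1), by ring⟩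
        obtain ⟨s, hs⟩ : ∃ s, 8*r*r = 8*s := ⟨r*r, by ring⟩
        unfold sC
        split_ifs <;> omega
  · -- center (8rj, 1): neighbors (-1 - 8(j + nr), 0)
    simp only at hla; subst hla; subst hja
    apply Set.infinite_of_injective_forall_mem
      (f := fun n : ℕ => ((-1 - 8*(j + (n:ℤ)*r), (0:Fin 2)) : ℤ × Fin 2))
    · intro n1 n2 h
      simp only [Prod.mk.injEq] at h
      have h1 : (n1:ℤ)*r = (n2:ℤ)*r := by linarith [h.1]
      have h2 : (n1:ℤ) = (n2:ℤ) := mul_right_cancel₀ (by omega) h1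
      omega
    · intro n
      rw [SimpleGraph.mem_neighborSet, adj10]
      have hδ : 8*r*j - (-1 - 8*(j + (n:ℤ)*r)) = (j + r*(j + (n:ℤ)))*8 + 1 := by ring
      rw [hδ]
      have hdv : ((j + r*(j+(n:ℤ)))*8 + 1)/8 = j + r*(j+(n:ℤ)) := by
        rw [show (j + r*(j+(n:ℤ)))*8 + 1 = 1 + (j + r*(j+(n:ℤ)))*8 by ring,
          Int.add_mul_ediv_right _ _ (by norm_num : (8:ℤ) ≠ 0)]
        norm_num
      have hδ8 : ((j + r*(j+(n:ℤ)))*8 + 1) % 8 = 1 := by omega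
      unfold sC
      split_ifs with hb1 hb2 hb3
      · rw [hdv, Int.add_mul_emod_self_left, Int.emod_eq_of_lt hj0 hjr]
        ring
      all_goals omega
lemma uniq_all (r : ℤ) (hr : 2 ≤ r) (v : ℤ × Fin 2) (hv : ¬ ctr r v) :
    ∃ c, ctr r c ∧ ∀ w, (Gam r).Adj v w ↔ w = c := by
  obtain ⟨m, l⟩ := v
  rcases fin2_cases l with rfl | rfl
  · apply uniq0 r m hr
    · intro h; exact hv (Or.inl ⟨rfl, Or.inl h⟩)
    · intro h; exact hv (Or.inl ⟨rfl, Or.inr h⟩)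
  · apply uniq1 r m hr
    intro h
    exact hv (Or.inr ⟨rfl, (ctr1_iff r m hr).mpr h⟩)

def cen (r : ℤ) (k : ℕ) (i : Fin k) : ℤ × Fin 2 :=
  if (i : ℕ) = 0 then ((0:ℤ), 0) else if (i : ℕ) = 1 then (8*r*r, 0)
  else (8*r*(((i : ℕ) : ℤ) - 2), 1)

lemma cen_ctr (r : ℤ) (k : ℕ) (hr : 2 ≤ r) (hk : (k:ℤ) = r + 2) (i : Fin k) :
    ctr r (cen r k i) := by
  have hi := i.isLt
  unfold cen
  split_ifs with h1 h2
  · exact Or.inl ⟨rfl, Or.inl rfl⟩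
  · exact Or.inl ⟨rfl, Or.inr rfl⟩
  · exact Or.inr ⟨rfl, ⟨((i : ℕ) : ℤ) - 2, by omega, by omega, rfl⟩⟩

lemma cen_inj (r : ℤ) (k : ℕ) (hr : 2 ≤ r) (hk : (k:ℤ) = r + 2) :
    Function.Injective (cen r k) := by
  have hrr : (0:ℤ) < 8*r*r := by positivity
  intro i1 i2 h
  unfold cen at h
  split_ifs at h with h1 h2 h3 h4 h5 h6 h7 h8 h9 <;>
    rw [Prod.mk.injEq] at h <;>
    first
      | (exact Fin.ext (by omega))
      | (exfalso; revert h; decide)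
      | (exfalso; simp only [] at h; omega)
      | (exfalso; exact absurd h.2 (by decide))
      | skip
  · -- both in third branch
    have := mul_left_cancel₀ (show (8*r:ℤ) ≠ 0 by omega) h.1
    exact Fin.ext (by omega)

lemma ctr_iff_cen (r : ℤ) (k : ℕ) (hr : 2 ≤ r) (hk : (k:ℤ) = r + 2) (v : ℤ × Fin 2) :
    ctr r v ↔ ∃ i, v = cen r k i := by
  constructor
  · intro hv
    obtain ⟨a, la⟩ := v
    rcases hv with ⟨hla, ha⟩ | ⟨hla, j, hj0, hjr, hja⟩
    · simp only at hla; subst hla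
      rcases ha with rfl | rfl
      · exact ⟨⟨0, by omega⟩, by simp [cen]⟩
      · exact ⟨⟨1, by omega⟩, by simp [cen]⟩
    · simp only at hla; subst hla; subst hja
      refine ⟨⟨j.toNat + 2, by omega⟩, ?_⟩
      simp only [cen]
      rw [if_neg (by simp), if_neg (by simp)]
      rw [Prod.mk.injEq]
      constructor
      · congr 1
        push_cast
        omega
      · rfl
  · rintro ⟨i, rfl⟩
    exact cen_ctr r k hr hk i
lemma kstar_adj (k : ℕ) (a b : Fin k × ℕ) :
    (kStar k).Adj a b ↔ a ≠ b ∧ ((a.1 = b.1 ∧ a.2 = 0 ∧ b.2 ≠ 0) ∨ (b.1 = a.1 ∧ b.2 = 0 ∧ a.2 ≠ 0)) := by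
  simp [kStar, SimpleGraph.fromRel_adj]

lemma iso_exists (r : ℤ) (k : ℕ) (hr : 2 ≤ r) (hk : (k:ℤ) = r + 2) :
    Nonempty (kStar k ≃g Gam r) := by
  classical
  have hne : ∀ i : Fin k, Nonempty (ℕ ≃ ((Gam r).neighborSet (cen r k i))) := by
    intro i
    have h1 : ((Gam r).neighborSet (cen r k i)).Infinite :=
      inf_nbr r hr _ (cen_ctr r k hr hk i)
    have := h1.to_subtype
    exact ⟨((nonempty_denumerable _).some.eqv).symm⟩
  set e : (i : Fin k) → (ℕ ≃ ((Gam r).neighborSet (cen r k i))) :=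
    fun i => (hne i).some with he
  set f : Fin k × ℕ → ℤ × Fin 2 :=
    fun p => Nat.casesOn p.2 (cen r k p.1) (fun n => ((e p.1) n : ℤ × Fin 2)) with hf
  have hf0 : ∀ i : Fin k, f (i, 0) = cen r k i := fun i => rfl
  have hfs : ∀ (i : Fin k) (n : ℕ), f (i, n+1) = ((e i) n : ℤ × Fin 2) := fun i n => rfl
  have hadjf : ∀ (i : Fin k) (n : ℕ), (Gam r).Adj (cen r k i) (f (i, n+1)) := by
    intro i n
    rw [hfs]
    exact ((e i) n).2
  have hleafnc : ∀ (i : Fin k) (n : ℕ), ¬ ctr r (f (i, n+1)) := by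
    intro i n hc
    exact nocc r hr _ _ (cen_ctr r k hr hk i) hc (hadjf i n)
  have hleafctr : ∀ (i j : Fin k) (n : ℕ), (Gam r).Adj (cen r k j) (f (i, n+1)) → j = i := by
    intro i j n hadj
    obtain ⟨c, _, hc⟩ := uniq_all r hr _ (hleafnc i n)
    have h1 : cen r k j = c := (hc _).mp hadj.symm
    have h2 : cen r k i = c := (hc _).mp (hadjf i n).symm
    exact cen_inj r k hr hk (h1.trans h2.symm)
  have hbij : Function.Bijective f := by
    constructor
    · rintro ⟨i1, n1⟩ ⟨i2, n2⟩ h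
      rcases n1 with _ | n1 <;> rcases n2 with _ | n2
      case zero.zero =>
        rw [hf0, hf0] at h
        rw [cen_inj r k hr hk h]
      case zero.succ =>
        exact absurd (h ▸ cen_ctr r k hr hk i1) (hleafnc i2 n2)
      case succ.zero =>
        exact absurd (h ▸ hleafnc i1 n1) (fun hx => hx (cen_ctr r k hr hk i2))
      case succ.succ =>
        have hij : i2 = i1 := hleafctr i1 i2 n1 (by rw [h]; exact hadjf i2 n2)
        subst hij
        have h2 : (e i2) n1 = (e i2) n2 := Subtype.ext (by rw [← hfs, ← hfs]; exact h)
        have h3 := (e i2).injective h2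
        simp [h3]
    · intro v
      by_cases hv : ctr r v
      · obtain ⟨i, rfl⟩ := (ctr_iff_cen r k hr hk v).mp hv
        exact ⟨(i, 0), rfl⟩
      · obtain ⟨c, hcc, hc⟩ := uniq_all r hr v hv
        obtain ⟨i, rfl⟩ := (ctr_iff_cen r k hr hk c).mp hcc
        have hadj : (Gam r).Adj (cen r k i) v := ((hc _).mpr rfl).symm
        refine ⟨(i, ((e i).symm ⟨v, hadj⟩) + 1), ?_⟩
        rw [hfs, Equiv.apply_symm_apply]
  have haux : ∀ a b, (Gam r).Adj (f a) (f b) ↔ (kStar k).Adj a b := by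
    rintro ⟨i, m⟩ ⟨j, n⟩
    rw [kstar_adj]
    rcases m with _ | m <;> rcases n with _ | n
    case zero.zero =>
      rw [hf0, hf0]
      constructor
      · intro h
        exact absurd h (nocc r hr _ _ (cen_ctr r k hr hk i) (cen_ctr r k hr hk j))
      · rintro ⟨hne', (⟨_, _, hx⟩ | ⟨_, _, hx⟩)⟩ <;> simp at hx
    case zero.succ =>
      rw [hf0]
      constructor
      · intro h
        have := (hleafctr j i n h).symm
        subst this
        exact ⟨by simp, Or.inl ⟨rfl, rfl, by omega⟩⟩
      · rintro ⟨hne', (⟨h1, _, _⟩ | ⟨_, h2, _⟩)⟩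
        · subst h1; exact hadjf i n
        · omega
    case succ.zero =>
      rw [hf0]
      rw [SimpleGraph.adj_comm]
      constructor
      · intro h
        have := (hleafctr i j m h).symm
        subst this
        exact ⟨by simp, Or.inr ⟨rfl, rfl, by omega⟩⟩
      · rintro ⟨hne', (⟨_, h2, _⟩ | ⟨h1, _, _⟩)⟩
        · omega
        · subst h1; exact hadjf j m
    case succ.succ =>
      constructor
      · intro h
        exfalso
        obtain ⟨c, hcc, hc⟩ := uniq_all r hr _ (hleafnc i m)
        have := (hc _).mp h
        exact hleafnc j n (this ▸ hcc)
      · rintro ⟨hne', (⟨_, h2, _⟩ | ⟨_, _, h2⟩)⟩ <;> omega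
  exact ⟨⟨Equiv.ofBijective f hbij, fun {a b} => haux a b⟩⟩
lemma exid (r : ℤ) (u v : ℤ × Fin 2) (huv : u ≠ v) :
    ∃! d : ℤ, (Gam r).Adj (u.1 - d, u.2) (v.1 - d, v.2) := by
  obtain ⟨x, i⟩ := u
  obtain ⟨y, j⟩ := v
  simp only
  rcases fin2_cases i with rfl | rfl <;> rcases fin2_cases j with rfl | rfl
  · have hxy : x ≠ y := fun h => huv (by rw [h])
    rcases lt_or_gt_of_ne hxy with hlt | hgt
    · refine ⟨x - sA (y - x), ?_, ?_⟩
      · beta_reduce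
        rw [adj00, show (y - (x - sA (y-x))) - (x - (x - sA (y-x))) = y - x by ring]
        exact ⟨by omega, Or.inl ⟨by omega, by omega⟩⟩
      · intro d' hd
        rw [adj00] at hd
        obtain ⟨hne, hcase⟩ := hd
        rw [show (y - d') - (x - d') = y - x by ring,
          show (x - d') - (y - d') = x - y by ring] at hcase
        rcases hcase with ⟨h1, h2⟩ | ⟨h1, h2⟩ <;> omega
    · refine ⟨y - sA (x - y), ?_, ?_⟩
      · beta_reduce
        rw [adj00, show (x - (y - sA (x-y))) - (y - (y - sA (x-y))) = x - y by ring]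
        exact ⟨by omega, Or.inr ⟨by omega, by omega⟩⟩
      · intro d' hd
        rw [adj00] at hd
        obtain ⟨hne, hcase⟩ := hd
        rw [show (y - d') - (x - d') = y - x by ring,
          show (x - d') - (y - d') = x - y by ring] at hcase
        rcases hcase with ⟨h1, h2⟩ | ⟨h1, h2⟩ <;> omega
  · refine ⟨x - sC r (y - x), ?_, ?_⟩
    · beta_reduce
      rw [adj01, show (y - (x - sC r (y-x))) - (x - (x - sC r (y-x))) = y - x by ring]
      omega
    · intro d' hd
      rw [adj01, show (y - d') - (x - d') = y - x by ring] at hd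
      omega
  · refine ⟨y - sC r (x - y), ?_, ?_⟩
    · beta_reduce
      rw [adj10, show (x - (y - sC r (x-y))) - (y - (y - sC r (x-y))) = x - y by ring]
      omega
    · intro d' hd
      rw [adj10, show (x - d') - (y - d') = x - y by ring] at hd
      omega
  · have hxy : x ≠ y := fun h => huv (by rw [h])
    rcases lt_or_gt_of_ne hxy with hlt | hgt
    · refine ⟨x - sA (y - x), ?_, ?_⟩
      · beta_reduce
        rw [adj11, show (y - (x - sA (y-x))) - (x - (x - sA (y-x))) = y - x by ring]
        exact ⟨by omega, Or.inl ⟨by omega, by omega⟩⟩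
      · intro d' hd
        rw [adj11] at hd
        obtain ⟨hne, hcase⟩ := hd
        rw [show (y - d') - (x - d') = y - x by ring,
          show (x - d') - (y - d') = x - y by ring] at hcase
        rcases hcase with ⟨h1, h2⟩ | ⟨h1, h2⟩ <;> omega
    · refine ⟨y - sA (x - y), ?_, ?_⟩
      · beta_reduce
        rw [adj11, show (x - (y - sA (x-y))) - (y - (y - sA (x-y))) = x - y by ring]
        exact ⟨by omega, Or.inr ⟨by omega, by omega⟩⟩
      · intro d' hd
        rw [adj11] at hd
        obtain ⟨hne, hcase⟩ := hd
        rw [show (y - d') - (x - d') = y - x by ring,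
          show (x - d') - (y - d') = x - y by ring] at hcase
        rcases hcase with ⟨h1, h2⟩ | ⟨h1, h2⟩ <;> omega

def transEquiv (d : ℤ) : (ℤ × Fin 2) ≃ (ℤ × Fin 2) where
  toFun p := (p.1 + d, p.2)
  invFun p := (p.1 - d, p.2)
  left_inv p := by simp
  right_inv p := by simp

def transIso (r d : ℤ) : Gam r ≃g graphTranslate d (Gam r) := by
  refine ⟨transEquiv d, ?_⟩
  intro a b
  simp only [graphTranslate, SimpleGraph.comap_adj, transEquiv, Equiv.coe_fn_mk]
  have h1 : a.1 + d - d = a.1 := by ring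
  have h2 : b.1 + d - d = b.1 := by ring
  rw [h1, h2]

/-- for every `k ≥ 4` there is a graph `Γ` with vertex set
`V = ℤ × {0, 1}` isomorphic to the `k`-star `S_k` such that
`Orb_ℤ(Γ) = {Γ + d : d ∈ ℤ}` is a factorization of the complete graph `K_V`
into factors each isomorphic to `S_k`. -/
theorem stmt_15 (k : ℕ) (hk : 4 ≤ k) :
    ∃ Γ : SimpleGraph (ℤ × Fin 2), Nonempty (kStar k ≃g Γ) ∧
      IsFactorizationSet (⊤ : SimpleGraph (ℤ × Fin 2)) (zOrbit Γ) ∧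
        ∀ Γ' ∈ zOrbit Γ, Nonempty (kStar k ≃g Γ') := by
  set r : ℤ := (k:ℤ) - 2 with hrdef
  have hr : 2 ≤ r := by omega
  have hkr : (k:ℤ) = r + 2 := by omega
  obtain ⟨iso0⟩ := iso_exists r k hr hkr
  refine ⟨Gam r, ⟨iso0⟩, ⟨fun Γ' _ => le_top, ?_⟩, ?_⟩
  · intro e he
    revert he
    refine Sym2.ind (fun u v => ?_) e
    intro he
    have huv : u ≠ v := by simpa using he
    obtain ⟨d0, hd0, hduniq⟩ := exid r u v huv
    refine ⟨graphTranslate d0 (Gam r), ⟨⟨d0, rfl⟩, ?_⟩, ?_⟩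
    · rw [SimpleGraph.mem_edgeSet]
      simpa [graphTranslate] using hd0
    · rintro Γ'' ⟨⟨d1, rfl⟩, hmem⟩
      have hd1 : d1 = d0 := by
        apply hduniq
        simpa [graphTranslate, SimpleGraph.mem_edgeSet] using hmem
      rw [hd1]
  · rintro Γ' ⟨d, rfl⟩
    exact ⟨iso0.trans (transIso r d)⟩
end

section
/- For every integer h ≥ 0, there is no graph Γ with vertex set V = ℤ × {0, 1, …, h} isomorphic to the 3-star S_3 such that Orb_ℤ(Γ) = {Γ + d : d ∈ ℤ} is a factorization of the complete graph K_V into 3-stars. -/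
/-!
Every edge of `K_V` lies in exactly one translate of `Γ`, and `Γ`, whose edges all meet the
finite set of its three centres, has no nonzero period; hence `Γ` contains exactly one edge
from each translation class of edges of `K_V`. Edges inside a row `r` fall into classes indexed
by their length `|y - x| ≥ 1`, and only stars centred in row `r` can contain them.

If the three centres lie in one row, the non-centre vertices of that row in `[-N, N]` give about
`2N` pairwise distinct lengths that are at most about `N`, which is absurd. Otherwise some
centre `c` is alone in its row `r'`. The class of an edge from `c` to another centre `c₁` must
then be represented by a star centred at a centre `c₂ ≠ c₁` in the row of `c₁`, which contains
`c + (c₂ - c₁)`. Applied to both other centres, this shows that they share a row and that, with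
`δ ≠ 0` their horizontal distance, `c + δ` and `c - δ` are leaves of their stars. The class of
the edge `{c, c + δ}` lies in row `r'`, so the star at `c` contains `c + δ` or `c - δ`; but a
leaf has only one neighbour.
-/

open SimpleGraph Finset

theorem false_of_injective_abs_sub (C : Finset ℤ) (R : ℤ → ℤ → Prop)
    (hR : ∀ y ∉ C, ∃ p ∈ C, R y p)
    (hinj : ∀ y y' p p', y ∉ C → y' ∉ C → R y p → R y' p' → |y - p| = |y' - p'| → y = y') :
    False := by
  choose! f hfC hfR using hR
  set K := ∑ c ∈ C, |c|
  have hK : ∀ c ∈ C, |c| ≤ K := fun c hc => single_le_sum (fun c _ => abs_nonneg c) hc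
  have hK0 : 0 ≤ K := sum_nonneg fun c _ => abs_nonneg c
  set N := K + #C
  have hmaps : ∀ y ∈ Icc (-N) N \ C, |y - f y| ∈ Icc 1 (N + K) := by
    intro y hy
    rw [mem_sdiff, mem_Icc] at hy
    have hne : y - f y ≠ 0 := sub_ne_zero.mpr fun e => hy.2 (e ▸ hfC y hy.2)
    refine mem_Icc.mpr ⟨Int.one_le_abs hne, ?_⟩
    calc |y - f y| ≤ |y| + |f y| := abs_sub _ _
      _ ≤ N + K := add_le_add (abs_le.mpr hy.1) (hK _ (hfC y hy.2))
  have hinjOn : Set.InjOn (fun y => |y - f y|) (Icc (-N) N \ C : Finset ℤ) := by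
    intro y hy y' hy' e
    simp only [coe_sdiff, Set.mem_sdiff, mem_coe] at hy hy'
    exact hinj y y' _ _ hy.2 hy'.2 (hfR y hy.2) (hfR y' hy'.2) e
  have hcard := card_le_card_of_injOn _ hmaps hinjOn
  have hsdiff := le_card_sdiff C (Icc (-N) N)
  rw [Int.card_Icc] at hcard hsdiff
  omega

lemma fin_three_const_or_exists_isolated {α : Type*} (f : Fin 3 → α) :
    (∃ c, ∀ a, f a = c) ∨ ∃ m, ∀ a, f a = f m → a = m := by
  by_cases h01 : f 0 = f 1 <;> by_cases h02 : f 0 = f 2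
  · exact Or.inl ⟨f 0, fun a => by fin_cases a <;> grind⟩
  · exact Or.inr ⟨2, fun a ha => by fin_cases a <;> grind⟩
  · exact Or.inr ⟨1, fun a ha => by fin_cases a <;> grind⟩
  · exact Or.inr ⟨0, fun a ha => by fin_cases a <;> grind⟩

section Star

variable {k : ℕ}

lemma kStar_adj_iff {a b : Fin k × ℕ} :
    (kStar k).Adj a b ↔ a.1 = b.1 ∧ (a.2 = 0 ∧ b.2 ≠ 0 ∨ b.2 = 0 ∧ a.2 ≠ 0) := by
  rw [kStar, fromRel_adj]
  grind

lemma kStar_adj_iff_of_snd_ne_zero {p q : Fin k × ℕ} (hp : p.2 ≠ 0) :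
    (kStar k).Adj q p ↔ q = (p.1, 0) := by
  rw [kStar_adj_iff]
  grind

variable {V : Type*} {Γ : SimpleGraph V} (φ : kStar k ≃g Γ)

lemma not_adj_centers (a b : Fin k) : ¬ Γ.Adj (φ (a, 0)) (φ (b, 0)) := by
  simp [φ.map_adj_iff, kStar_adj_iff]

lemma exists_center_of_adj {u v : V} (huv : Γ.Adj u v) :
    (∃ a, φ (a, 0) = u) ∨ ∃ a, φ (a, 0) = v := by
  rw [← φ.apply_symm_apply u, ← φ.apply_symm_apply v, φ.map_adj_iff, kStar_adj_iff] at huv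
  rcases huv with ⟨-, ⟨hu, -⟩ | ⟨hv, -⟩⟩
  · exact Or.inl ⟨(φ.symm u).1, by rw [← hu, φ.apply_symm_apply]⟩
  · exact Or.inr ⟨(φ.symm v).1, by rw [← hv, φ.apply_symm_apply]⟩

lemma exists_forall_adj_iff_eq_center {v : V} (hv : ∀ a, φ (a, 0) ≠ v) :
    ∃ a, ∀ x, Γ.Adj x v ↔ x = φ (a, 0) := by
  have h0 : (φ.symm v).2 ≠ 0 := fun h0 => hv (φ.symm v).1 (by rw [← h0, φ.apply_symm_apply])
  refine ⟨(φ.symm v).1, fun x => ?_⟩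
  rw [← φ.apply_symm_apply x, ← φ.apply_symm_apply v, φ.map_adj_iff,
    kStar_adj_iff_of_snd_ne_zero h0, φ.apply_symm_apply, φ.symm.injective.eq_iff.symm]
  simp

end Star

section Translate

variable {m : ℕ}

def vertexTranslate (d : ℤ) (p : ℤ × Fin m) : ℤ × Fin m := (p.1 + d, p.2)

@[simp] lemma vertexTranslate_fst (d : ℤ) (p : ℤ × Fin m) : (vertexTranslate d p).1 = p.1 + d := rfl

@[simp] lemma vertexTranslate_snd (d : ℤ) (p : ℤ × Fin m) : (vertexTranslate d p).2 = p.2 := rfl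

@[simp] lemma vertexTranslate_zero (p : ℤ × Fin m) : vertexTranslate 0 p = p := by
  simp [vertexTranslate]

@[simp] lemma vertexTranslate_vertexTranslate (d e : ℤ) (p : ℤ × Fin m) :
    vertexTranslate d (vertexTranslate e p) = vertexTranslate (e + d) p := by
  simp [vertexTranslate, add_assoc]

lemma vertexTranslate_eq_self_iff {d : ℤ} {p : ℤ × Fin m} : vertexTranslate d p = p ↔ d = 0 := by
  simp [vertexTranslate, Prod.ext_iff]

variable {Γ : SimpleGraph (ℤ × Fin m)}

lemma graphTranslate_adj {d : ℤ} {u v : ℤ × Fin m} :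
    (graphTranslate d Γ).Adj u v ↔ Γ.Adj (vertexTranslate (-d) u) (vertexTranslate (-d) v) := by
  simp [graphTranslate, vertexTranslate, sub_eq_add_neg]

lemma graphTranslate_zero : graphTranslate 0 Γ = Γ := by
  ext u v
  simp [graphTranslate_adj]

lemma eq_zero_of_graphTranslate_eq {C : Set (ℤ × Fin m)} (hC : C.Finite)
    (hcover : ∀ u v, Γ.Adj u v → u ∈ C ∨ v ∈ C) {u v : ℤ × Fin m} (huv : Γ.Adj u v) {g : ℤ}
    (hg : graphTranslate g Γ = Γ) : g = 0 := by
  by_contra hg0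
  have hper : ∀ n : ℕ, Γ.Adj (vertexTranslate (n * g) u) (vertexTranslate (n * g) v) := by
    intro n
    induction n with
    | zero => simpa using huv
    | succ n ih =>
      rw [← hg, graphTranslate_adj]
      simpa [add_mul] using ih
  have hfin : ∀ w, ((fun n : ℕ => vertexTranslate (n * g) w) ⁻¹' C).Finite := fun w =>
    hC.preimage fun n _ n' _ e => by
      simpa [vertexTranslate, hg0] using e
  exact Set.infinite_univ ((hfin u).union (hfin v) |>.subset fun n _ => hcover _ _ (hper n))

namespace IsFactorizationSet

lemma exists_adj_vertexTranslate (hΓ : IsFactorizationSet ⊤ (zOrbit Γ))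
    {u v : ℤ × Fin m} (huv : u ≠ v) : ∃ d, Γ.Adj (vertexTranslate d u) (vertexTranslate d v) := by
  obtain ⟨_, ⟨⟨d, rfl⟩, he⟩, -⟩ := hΓ.2 s(u, v) (by simpa using huv)
  exact ⟨-d, graphTranslate_adj.mp he⟩

lemma graphTranslate_eq_of_adj (hΓ : IsFactorizationSet ⊤ (zOrbit Γ))
    {u v : ℤ × Fin m} {d : ℤ} (h : Γ.Adj u v)
    (hd : Γ.Adj (vertexTranslate d u) (vertexTranslate d v)) : graphTranslate d Γ = Γ := by
  obtain ⟨_, -, huniq⟩ := hΓ.2 s(vertexTranslate d u, vertexTranslate d v) (by simpa using hd.ne)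
  have h0 := huniq Γ ⟨⟨0, graphTranslate_zero.symm⟩, hd⟩
  exact (huniq _ ⟨⟨d, rfl⟩, by simpa [graphTranslate_adj] using h⟩).trans h0.symm

end IsFactorizationSet

end Translate

section StarOrbit

variable {m k : ℕ} {Γ : SimpleGraph (ℤ × Fin m)}

lemma eq_zero_of_adj_vertexTranslate (φ : kStar k ≃g Γ)
    (hΓ : IsFactorizationSet ⊤ (zOrbit Γ))
    {u v : ℤ × Fin m} {d : ℤ} (h : Γ.Adj u v)
    (hd : Γ.Adj (vertexTranslate d u) (vertexTranslate d v)) : d = 0 :=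
  eq_zero_of_graphTranslate_eq (Set.finite_range fun a => φ (a, 0))
    (fun _ _ => exists_center_of_adj φ) h (hΓ.graphTranslate_eq_of_adj h hd)

lemma exists_center_eq_vertexTranslate (φ : kStar k ≃g Γ)
    (hΓ : IsFactorizationSet ⊤ (zOrbit Γ)) {u v : ℤ × Fin m} (huv : u ≠ v) :
    ∃ a d, (φ (a, 0) = vertexTranslate d u ∧ Γ.Adj (φ (a, 0)) (vertexTranslate d v)) ∨
      (φ (a, 0) = vertexTranslate d v ∧ Γ.Adj (φ (a, 0)) (vertexTranslate d u)) := by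
  obtain ⟨d, hd⟩ := hΓ.exists_adj_vertexTranslate huv
  rcases exists_center_of_adj φ hd with ⟨a, ha⟩ | ⟨a, ha⟩
  · exact ⟨a, d, Or.inl ⟨ha, ha ▸ hd⟩⟩
  · exact ⟨a, d, Or.inr ⟨ha, ha ▸ hd.symm⟩⟩

lemma eq_of_adj_of_abs_sub_eq (φ : kStar k ≃g Γ)
    (hΓ : IsFactorizationSet ⊤ (zOrbit Γ)) {r : Fin m} {p y p' y' : ℤ} (h : Γ.Adj (p, r) (y, r))
    (h' : Γ.Adj (p', r) (y', r)) (habs : |y - p| = |y' - p'|) (hne : y' ≠ p) : y = y' := by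
  rcases abs_eq_abs.mp habs with e | e
  · have := eq_zero_of_adj_vertexTranslate φ hΓ h (d := p' - p) (by
      convert h' using 2 <;> simp [vertexTranslate]; omega)
    omega
  · have := eq_zero_of_adj_vertexTranslate φ hΓ h (d := y' - p) (by
      convert h'.symm using 2 <;> simp [vertexTranslate]; omega)
    omega

theorem false_of_centers_in_one_row (φ : kStar k ≃g Γ)
    (hΓ : IsFactorizationSet ⊤ (zOrbit Γ)) {r : Fin m} (hr : ∀ a, (φ (a, 0)).2 = r) : False := by
  have hc : ∀ a, φ (a, 0) = ((φ (a, 0)).1, r) := fun a => Prod.ext rfl (hr a)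
  refine false_of_injective_abs_sub (univ.image fun a => (φ (a, 0)).1)
    (fun y p => ∃ a, (φ (a, 0)).1 = p ∧ Γ.Adj (φ (a, 0)) (y, r)) (fun y hy => ?_) ?_
  · have hv : ∀ a, φ (a, 0) ≠ (y, r) := fun a ha => hy (mem_image.mpr ⟨a, mem_univ a, by rw [ha]⟩)
    obtain ⟨a, ha⟩ := exists_forall_adj_iff_eq_center φ hv
    exact ⟨_, mem_image_of_mem _ (mem_univ a), a, rfl, (ha _).mpr rfl⟩
  · rintro y y' _ _ - hy' ⟨a, rfl, ha⟩ ⟨b, rfl, hb⟩ habs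
    rw [hc a] at ha
    rw [hc b] at hb
    exact eq_of_adj_of_abs_sub_eq φ hΓ ha hb habs fun e =>
      hy' (e ▸ mem_image_of_mem _ (mem_univ a))

lemma eq_and_eq_zero_of_center_eq_vertexTranslate {m₀ : Fin k} (φ : kStar k ≃g Γ)
    (hm : ∀ a, (φ (a, 0)).2 = (φ (m₀, 0)).2 → a = m₀) {a : Fin k} {d : ℤ}
    (h : φ (a, 0) = vertexTranslate d (φ (m₀, 0))) : a = m₀ ∧ d = 0 := by
  obtain rfl : a = m₀ := hm a (by rw [h]; rfl)
  exact ⟨rfl, vertexTranslate_eq_self_iff.mp h.symm⟩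

lemma not_adj_vertexTranslate_of_isolated {m₀ : Fin k} (φ : kStar k ≃g Γ)
    (hm : ∀ a, (φ (a, 0)).2 = (φ (m₀, 0)).2 → a = m₀) {e : Fin k} {d : ℤ} (he : e ≠ m₀)
    (hadj : Γ.Adj (φ (e, 0)) (vertexTranslate d (φ (m₀, 0)))) :
    ¬ Γ.Adj (φ (m₀, 0)) (vertexTranslate d (φ (m₀, 0))) := by
  intro h
  have hv : ∀ a, φ (a, 0) ≠ vertexTranslate d (φ (m₀, 0)) := by
    intro a ha
    obtain ⟨-, rfl⟩ := eq_and_eq_zero_of_center_eq_vertexTranslate φ hm ha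
    exact not_adj_centers φ e m₀ (by simpa using hadj)
  obtain ⟨c, hc⟩ := exists_forall_adj_iff_eq_center φ hv
  exact he (by simpa using φ.injective (((hc _).mp hadj).trans ((hc _).mp h).symm))

lemma exists_adj_vertexTranslate_of_isolated {m₀ : Fin k} (φ : kStar k ≃g Γ)
    (hΓ : IsFactorizationSet ⊤ (zOrbit Γ)) (hm : ∀ a, (φ (a, 0)).2 = (φ (m₀, 0)).2 → a = m₀)
    {b : Fin k} (hb : b ≠ m₀) :
    ∃ e ≠ b, (φ (e, 0)).2 = (φ (b, 0)).2 ∧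
      Γ.Adj (φ (e, 0)) (vertexTranslate ((φ (e, 0)).1 - (φ (b, 0)).1) (φ (m₀, 0))) := by
  have hne : φ (m₀, 0) ≠ φ (b, 0) := by simpa using hb.symm
  obtain ⟨a, d, ⟨ha, hadj⟩ | ⟨ha, hadj⟩⟩ := exists_center_eq_vertexTranslate φ hΓ hne
  · obtain ⟨rfl, rfl⟩ := eq_and_eq_zero_of_center_eq_vertexTranslate φ hm ha
    exact absurd (by simpa using hadj) (not_adj_centers φ _ _)
  · have hd : d = (φ (a, 0)).1 - (φ (b, 0)).1 := by rw [ha]; simp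
    refine ⟨a, ?_, by rw [ha]; rfl, hd ▸ hadj⟩
    rintro rfl
    obtain rfl : d = 0 := by simpa using hd
    exact not_adj_centers φ a m₀ (by simpa using hadj)

theorem false_of_isolated_center {m₀ : Fin 3} (φ : kStar 3 ≃g Γ)
    (hΓ : IsFactorizationSet ⊤ (zOrbit Γ)) (hm : ∀ a, (φ (a, 0)).2 = (φ (m₀, 0)).2 → a = m₀) :
    False := by
  have hrow : ∀ {a}, a ≠ m₀ → (φ (m₀, 0)).2 ≠ (φ (a, 0)).2 := fun ha h => ha (hm _ h.symm)
  obtain ⟨b, hb⟩ : ∃ b, b ≠ m₀ := ⟨m₀ + 1, by fin_cases m₀ <;> decide⟩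
  obtain ⟨l, hlb, hrl, hl⟩ := exists_adj_vertexTranslate_of_isolated φ hΓ hm hb
  have hlm : l ≠ m₀ := by rintro rfl; exact hrow hb hrl
  obtain ⟨b', hb'l, hrb', hb'⟩ := exists_adj_vertexTranslate_of_isolated φ hΓ hm hlm
  obtain rfl : b' = b := by
    have hb'm : b' ≠ m₀ := by rintro rfl; exact hrow hlm hrb'
    omega
  have hδ : (φ (l, 0)).1 - (φ (b', 0)).1 ≠ 0 := fun h =>
    hlb (by simpa using φ.injective (Prod.ext (sub_eq_zero.mp h) hrl))
  obtain ⟨a, d, ⟨ha, hadj⟩ | ⟨ha, hadj⟩⟩ := exists_center_eq_vertexTranslate φ hΓ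
    (u := φ (m₀, 0)) (v := vertexTranslate ((φ (l, 0)).1 - (φ (b', 0)).1) (φ (m₀, 0)))
    (by simpa [eq_comm (a := φ (m₀, 0)), vertexTranslate_eq_self_iff] using hδ)
  · obtain ⟨rfl, rfl⟩ := eq_and_eq_zero_of_center_eq_vertexTranslate φ hm ha
    exact not_adj_vertexTranslate_of_isolated φ hm hlm hl (by simpa using hadj)
  · rw [vertexTranslate_vertexTranslate] at ha
    obtain ⟨rfl, hd⟩ := eq_and_eq_zero_of_center_eq_vertexTranslate φ hm ha
    obtain rfl : d = (φ (b', 0)).1 - (φ (l, 0)).1 := by omega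
    exact not_adj_vertexTranslate_of_isolated φ hm hb hb' hadj

end StarOrbit

/-- for every `h ≥ 0` there is no graph `Γ` with vertex set
`V = ℤ × {0, 1, …, h}` isomorphic to the `3`-star `S₃` such that
`Orb_ℤ(Γ) = {Γ + d : d ∈ ℤ}` is a factorization of the complete graph `K_V`
into `3`-stars. -/
theorem stmt_16 (h : ℕ) :
    ¬ ∃ Γ : SimpleGraph (ℤ × Fin (h + 1)), Nonempty (kStar 3 ≃g Γ) ∧
        IsFactorizationSet (⊤ : SimpleGraph (ℤ × Fin (h + 1))) (zOrbit Γ) ∧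
          ∀ Γ' ∈ zOrbit Γ, Nonempty (kStar 3 ≃g Γ') := by
  rintro ⟨Γ, ⟨φ⟩, hΓ, -⟩
  rcases fin_three_const_or_exists_isolated fun a => (φ (a, 0)).2 with ⟨r, hr⟩ | ⟨m₀, hm⟩
  · exact false_of_centers_in_one_row φ hΓ hr
  · exact false_of_isolated_center φ hΓ hm
end

section
/- Let ℵ be an infinite cardinal and let F = {F_α : α ∈ A} be a family of non-empty graphs, each of order at most ℵ, with |A| = ℵ. For each α ∈ A choose a cardinal ℵ_α as follows: ℵ_α = ℵ whenever the domination number of F_α is less than ℵ, and ℵ_α is an arbitrary cardinal with 0 ≤ ℵ_α ≤ ℵ otherwise. Then there exists a decomposition G = {Γ_α : α ∈ A} of the complete graph K_ℵ such that each Γ_α is isomorphic to F_α and |V(K_ℵ) \ V(Γ_α)| = ℵ_α for every α ∈ A. -/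
universe u

def IsDominatingSet {V : Type*} (F : SimpleGraph V) (D : Set V) : Prop :=
  ∀ v ∉ D, ∃ d ∈ D, F.Adj v d

def IsDecomposition {A V : Type*} {Λ : SimpleGraph V} (G : A → Λ.Subgraph) : Prop :=
  ∀ e ∈ Λ.edgeSet, ∃! a, e ∈ (G a).edgeSet

/-!
Enumerate in order type `ℵ` (the initial ordinal) all tasks: cover the edge `xy` of `K_X`, place
the vertex `u` of `F a`, and put the point `x` into the copy of `F a`. Fix pairwise disjoint sets
`H a` of size `ℵ_a`, leaving `ℵ` points outside all of them, for the copy of `F a` to miss. Build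
the copies by transfinite recursion, each step adding at most two vertex assignments, so that
fewer than `ℵ` assignments precede every step. An uncovered edge `xy` becomes the image of a fixed
edge of a still unused `F a` (fewer than `ℵ` graphs are in use); a vertex is placed at an
untouched point off `H a`; and when `F a` has no dominating set of size `< ℵ`, the fewer than `ℵ`
vertices of `F a` placed so far do not dominate it, so some unplaced vertex without placed
neighbours can be sent to `x`. None of these moves creates an edge already used by another copy.
In the end `V(K_X) \ V(Γ_a)` is exactly `H a` for such `a`, and otherwise it contains `H a` while
`ℵ_a = ℵ`.
-/

open Cardinal Function

section TransfiniteIteration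

variable {ι α : Type u} [LinearOrder ι] [WellFoundedLT ι] (g : ι → Set α → Set α)

noncomputable def transfiniteIter : ι → Set α :=
  wellFounded_lt.fix fun i ih => g i (⋃ j : Set.Iio i, ih j j.2)

theorem transfiniteIter_eq (i : ι) :
    transfiniteIter g i = g i (⋃ j ∈ Set.Iio i, transfiniteIter g j) := by
  rw [transfiniteIter, WellFounded.fix_eq, Set.biUnion_eq_iUnion]

theorem monotone_transfiniteIter (hg : ∀ i s, s ⊆ g i s) : Monotone (transfiniteIter g) := by
  intro j i hji
  rcases hji.lt_or_eq with hji | rfl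
  · rw [transfiniteIter_eq g i]
    exact (Set.subset_biUnion_of_mem (s := Set.Iio i) (u := transfiniteIter g) hji).trans
      (hg _ _)
  · rfl

theorem transfiniteIter_induction (P : Set α → Prop)
    (hP : ∀ S, IsChain (· ⊆ ·) S → (∀ s ∈ S, P s) → P (⋃₀ S))
    (hg : ∀ i s, s ⊆ g i s) (hgP : ∀ i s, P s → P (g i s)) (I : Set ι) :
    P (⋃ i ∈ I, transfiniteIter g i) := by
  have hchain : ∀ I : Set ι, IsChain (· ⊆ ·) (transfiniteIter g '' I) := fun I =>
    (monotone_transfiniteIter g hg).isChain_range.mono (Set.image_subset_range _ _)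
  have hiter : ∀ i, P (transfiniteIter g i) := by
    intro i
    induction i using WellFoundedLT.induction with
    | ind i ih =>
      rw [transfiniteIter_eq]
      refine hgP _ _ ?_
      rw [← Set.sUnion_image]
      exact hP _ (hchain _) (Set.forall_mem_image.2 ih)
  rw [← Set.sUnion_image]
  exact hP _ (hchain I) (Set.forall_mem_image.2 fun i _ => hiter i)

theorem mk_biUnion_transfiniteIter_le {n : ℕ} (hn : ∀ i s, #↥(g i s \ s) ≤ n) (i : ι) :
    #↥(⋃ j ∈ Set.Iio i, transfiniteIter g j) ≤ #(Set.Iio i) * n := by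
  -- every element is new at the first stage that contains it
  have hsub : ⋃ j ∈ Set.Iio i, transfiniteIter g j ⊆
      ⋃ j ∈ Set.Iio i, (transfiniteIter g j \ ⋃ k ∈ Set.Iio j, transfiniteIter g k) := by
    intro p hp
    obtain ⟨j, hji, hj⟩ := Set.mem_iUnion₂.1 hp
    obtain ⟨k, hk, hmin⟩ := wellFounded_lt.has_min {k | p ∈ transfiniteIter g k} ⟨j, hj⟩
    have hkj : k ≤ j := not_lt.1 fun h => hmin j hj h
    refine Set.mem_iUnion₂.2 ⟨k, lt_of_le_of_lt hkj hji, hk, fun hk' => ?_⟩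
    obtain ⟨l, hlk, hl⟩ := Set.mem_iUnion₂.1 hk'
    exact hmin l hl hlk
  calc _ ≤ _ := mk_le_mk_of_subset hsub
    _ ≤ _ := mk_biUnion_le _ _
    _ ≤ _ := by
      gcongr
      exact ciSup_le' fun j => by rw [transfiniteIter_eq]; exact hn _ _

end TransfiniteIteration

section SmallExtension

variable {α : Type u}

def IsSmallExtension (n : ℕ) (s s' : Set α) : Prop := s ⊆ s' ∧ #↥(s' \ s) ≤ n

variable {n : ℕ} {s : Set α} {p q : α}

theorem isSmallExtension_refl : IsSmallExtension n s s := ⟨subset_rfl, by simp⟩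

theorem isSmallExtension_insert_insert : IsSmallExtension 2 s (insert p (insert q s)) := by
  refine ⟨(Set.subset_insert _ _).trans (Set.subset_insert _ _), ?_⟩
  calc #↥(insert p (insert q s) \ s) ≤ #↥({p, q} : Set α) := mk_le_mk_of_subset <| by
        intro z ⟨hz, hzs⟩
        rcases hz with rfl | rfl | hz
        exacts [Or.inl rfl, Or.inr rfl, absurd hz hzs]
    _ ≤ #↥({q} : Set α) + 1 := mk_insert_le
    _ = 2 := by rw [mk_singleton]; norm_num

theorem isSmallExtension_insert : IsSmallExtension 2 s (insert p s) := by
  simpa using isSmallExtension_insert_insert (s := s) (p := p) (q := p)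

theorem exists_forall_done_of_forall_exists_extension {T : Type u} (P : Set α → Prop)
    (Done : T → Set α → Prop) {κ : Cardinal.{u}} (hκ : ℵ₀ ≤ κ) (hT : #T ≤ κ) (n : ℕ)
    (hP : ∀ S, IsChain (· ⊆ ·) S → (∀ s ∈ S, P s) → P (⋃₀ S))
    (hDone : ∀ t, Monotone (Done t)) :
    ∃ s, P s ∧ ∀ t, (∀ b, P b → #b < κ → ∃ b', IsSmallExtension n b b' ∧ P b' ∧ Done t b') →
      Done t s := by
  classical
  obtain ⟨e⟩ : Nonempty (T ↪ κ.ord.ToType) := by rwa [← Cardinal.le_def, mk_ord_toType]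
  let IsGood (i : κ.ord.ToType) (b b' : Set α) : Prop :=
    IsSmallExtension n b b' ∧ P b' ∧ ∃ t, e t = i ∧ Done t b'
  let g i b := if h : ∃ b', IsGood i b b' then h.choose else b
  have hg_good : ∀ i b, (∃ b', IsGood i b b') → IsGood i b (g i b) := fun i b h => by
    simp only [g, dif_pos h]; exact h.choose_spec
  have hg_ext : ∀ i b, IsSmallExtension n b (g i b) := fun i b => by
    by_cases h : ∃ b', IsGood i b b'
    · exact (hg_good i b h).1
    · simp only [g, dif_neg h]; exact isSmallExtension_refl
  have hgP : ∀ i b, P b → P (g i b) := fun i b hb => by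
    by_cases h : ∃ b', IsGood i b b'
    · exact (hg_good i b h).2.1
    · simpa only [g, dif_neg h] using hb
  -- stage `e t` attempts `t`, starting from fewer than `κ` elements
  have hPiter := transfiniteIter_induction g P hP (fun i b => (hg_ext i b).1) hgP
  refine ⟨_, hPiter Set.univ, fun t ht => ?_⟩
  obtain ⟨b', hb', hPb', hdone⟩ := ht _ (hPiter (Set.Iio (e t)))
    ((mk_biUnion_transfiniteIter_le g (fun i b => (hg_ext i b).2) (e t)).trans_lt
      (mul_lt_of_lt hκ (by simpa using mk_Iio_lt (e t))
        ((natCast_lt_aleph0 (n := n)).trans_le hκ)))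
  obtain ⟨-, -, t', ht', hdone'⟩ := hg_good (e t) _ ⟨b', hb', hPb', t, rfl, hdone⟩
  rw [e.injective ht', ← transfiniteIter_eq g] at hdone'
  exact hDone t (Set.subset_biUnion_of_mem (Set.mem_univ (e t))) hdone'

end SmallExtension

theorem sum_le_of_forall_le {ι : Type u} {f : ι → Cardinal.{u}} {κ : Cardinal.{u}}
    (hκ : ℵ₀ ≤ κ) (hι : #ι ≤ κ) (hf : ∀ i, f i ≤ κ) : sum f ≤ κ :=
  calc sum f ≤ sum fun _ : ι => κ := sum_le_sum _ _ hf
    _ = #ι * κ := sum_const' _ _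
    _ ≤ κ * κ := by gcongr
    _ = κ := mul_eq_self hκ

theorem exists_pairwise_disjoint_mk_eq {A X : Type u} {κ : Cardinal.{u}} (hκ : ℵ₀ ≤ κ)
    (hX : #X = κ) (c : A → Cardinal.{u}) (hc : sum c ≤ κ) :
    ∃ H : A → Set X, Pairwise (Disjoint on H) ∧ (∀ a, #(H a) = c a) ∧ ∀ a, #↥(H a)ᶜ = κ := by
  obtain ⟨g⟩ : Nonempty ((Σ a, (c a).out) ⊕ κ.out ↪ X) := by
    rw [← le_def, mk_sum, mk_sigma, hX]
    simpa [add_eq_self hκ] using add_le_add_left hc κ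
  refine ⟨fun a => Set.range (g ∘ Sum.inl ∘ Sigma.mk a), fun a b hab => ?_, fun a => ?_,
    fun a => ?_⟩
  · refine Set.disjoint_left.2 ?_
    rintro _ ⟨i, rfl⟩ ⟨j, hj⟩
    exact hab (Sigma.mk.inj_iff.1 (Sum.inl_injective (g.injective hj))).1.symm
  · rw [mk_range_eq _ (g.injective.comp (Sum.inl_injective.comp sigma_mk_injective)), mk_out]
  · refine le_antisymm ((mk_set_le _).trans hX.le) ?_
    calc κ = #(Set.range (g ∘ Sum.inr)) := by
          rw [mk_range_eq _ (g.injective.comp Sum.inr_injective), mk_out]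
      _ ≤ _ := mk_le_mk_of_subset <| by
          rintro _ ⟨r, rfl⟩ ⟨i, hi⟩
          exact Sum.inl_ne_inr (g.injective hi)

def SimpleGraph.Copy.toTop {α β : Type*} (G : SimpleGraph α) (f : α ↪ β) :
    G.Copy (⊤ : SimpleGraph β) :=
  ⟨⟨f, fun h => f.injective.ne h.ne⟩, f.injective⟩

theorem SimpleGraph.Copy.verts_toSubgraph_toTop {α β : Type*} (G : SimpleGraph α)
    (f : α ↪ β) :
    (toTop G f).toSubgraph.verts = Set.range f := by
  simp [toTop]

theorem SimpleGraph.Copy.edgeSet_toSubgraph_toTop {α β : Type*} (G : SimpleGraph α)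
    (f : α ↪ β) :
    (toTop G f).toSubgraph.edgeSet = Sym2.map f '' G.edgeSet := by
  simp [toTop]

namespace GraphPacking

variable {A X : Type u} {V : A → Type u}

-- A placement is a set of triples `⟨a, (u, x)⟩`, read as "vertex `u` of `F a` is sent to `x`".
def dom (s : Set (Σ a, V a × X)) (a : A) : Set (V a) := {u | ∃ x, ⟨a, (u, x)⟩ ∈ s}

def ran (s : Set (Σ a, V a × X)) (a : A) : Set X := {x | ∃ u, ⟨a, (u, x)⟩ ∈ s}

def touched (s : Set (Σ a, V a × X)) : Set X := (·.2.2) '' s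

def used (s : Set (Σ a, V a × X)) : Set A := Sigma.fst '' s

variable (F : ∀ a, SimpleGraph (V a)) (H : A → Set X)

def edgeImage (s : Set (Σ a, V a × X)) (a : A) : Set (Sym2 X) :=
  {e | ∃ u w x y, (F a).Adj u w ∧ ⟨a, (u, x)⟩ ∈ s ∧ ⟨a, (w, y)⟩ ∈ s ∧ s(x, y) = e}

structure IsPacking (s : Set (Σ a, V a × X)) : Prop where
  func : ∀ ⦃a u x x'⦄, ⟨a, (u, x)⟩ ∈ s → ⟨a, (u, x')⟩ ∈ s → x = x'
  inj : ∀ ⦃a u u' x⦄, ⟨a, (u, x)⟩ ∈ s → ⟨a, (u', x)⟩ ∈ s → u = u'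
  avoid : ∀ ⦃a u x⦄, ⟨a, (u, x)⟩ ∈ s → x ∉ H a
  disj : ∀ ⦃a b e⦄, e ∈ edgeImage F s a → e ∈ edgeImage F s b → a = b

variable {F H} {s : Set (Σ a, V a × X)} {a : A}

theorem mk_mem_insert_mk_iff {p q : V a × X} :
    (⟨a, p⟩ : Σ a, V a × X) ∈ insert ⟨a, q⟩ s ↔ p = q ∨ ⟨a, p⟩ ∈ s := by
  simp

theorem mk_mem_insert_mk_of_ne {b : A} {p : V b × X} {q : V a × X} (hb : b ≠ a) :
    (⟨b, p⟩ : Σ a, V a × X) ∈ insert ⟨a, q⟩ s ↔ ⟨b, p⟩ ∈ s := by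
  simp [hb]

theorem mk_dom_le : #(dom s a) ≤ #s := by
  have : dom s a = Prod.fst '' (Sigma.mk (β := fun a => V a × X) a ⁻¹' s) := by
    ext u; simp [dom]
  rw [this]
  exact mk_image_le.trans (mk_preimage_of_injective _ _ sigma_mk_injective)

theorem ran_subset_touched : ran s a ⊆ touched s := fun _ ⟨_, h⟩ => ⟨_, h, rfl⟩

theorem notMem_of_notMem_used {p : V a × X} (ha : a ∉ used s) : ⟨a, p⟩ ∉ s :=
  fun h => ha ⟨_, h, rfl⟩

theorem edgeImage_mono {s s' : Set (Σ a, V a × X)} (h : s ⊆ s') :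
    edgeImage F s a ⊆ edgeImage F s' a := by
  rintro e ⟨u, w, x, y, hadj, hu, hw, rfl⟩
  exact ⟨u, w, x, y, hadj, h hu, h hw, rfl⟩

theorem mem_ran_of_mem_edgeImage {e : Sym2 X} {x : X} (he : e ∈ edgeImage F s a)
    (hx : x ∈ e) : x ∈ ran s a := by
  obtain ⟨u, w, x, y, -, hu, hw, rfl⟩ := he
  rcases Sym2.mem_iff.1 hx with rfl | rfl
  exacts [⟨u, hu⟩, ⟨w, hw⟩]

theorem edgeImage_insert_of_ne {b : A} {p : V a × X} (hb : b ≠ a) :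
    edgeImage F (insert ⟨a, p⟩ s) b = edgeImage F s b := by
  simp only [edgeImage, mk_mem_insert_mk_of_ne hb]

theorem mem_edgeImage_insert {u : V a} {x : X} {e : Sym2 X}
    (he : e ∈ edgeImage F (insert ⟨a, (u, x)⟩ s) a) :
    e ∈ edgeImage F s a ∨ ∃ w y, (F a).Adj u w ∧ ⟨a, (w, y)⟩ ∈ s ∧ s(x, y) = e := by
  obtain ⟨u', w', x', y', hadj, hu', hw', rfl⟩ := he
  rw [mk_mem_insert_mk_iff, Prod.mk.injEq] at hu' hw'
  rcases hu' with ⟨rfl, rfl⟩ | hu' <;> rcases hw' with ⟨rfl, rfl⟩ | hw'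
  · exact absurd hadj (F a).irrefl
  · exact Or.inr ⟨w', y', hadj, hw', rfl⟩
  · exact Or.inr ⟨u', x', hadj.symm, hu', Sym2.eq_swap⟩
  · exact Or.inl ⟨u', w', x', y', hadj, hu', hw', rfl⟩

theorem IsPacking.insert (hs : IsPacking F H s) {u : V a} {x : X} (hu : u ∉ dom s a)
    (hx : x ∉ ran s a) (hxH : x ∉ H a)
    (hnew : ∀ ⦃w y⦄, (F a).Adj u w → ⟨a, (w, y)⟩ ∈ s → ∀ b ≠ a, s(x, y) ∉ edgeImage F s b) :
    IsPacking F H (insert ⟨a, (u, x)⟩ s) where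
  func b v z z' hz hz' := by
    rcases eq_or_ne b a with rfl | hb
    · rw [mk_mem_insert_mk_iff, Prod.mk.injEq] at hz hz'
      rcases hz with ⟨rfl, rfl⟩ | hz <;> rcases hz' with ⟨h, rfl⟩ | hz'
      · rfl
      · exact absurd ⟨z', hz'⟩ hu
      · exact absurd ⟨z, hz⟩ (h ▸ hu)
      · exact hs.func hz hz'
    · rw [mk_mem_insert_mk_of_ne hb] at hz hz'
      exact hs.func hz hz'
  inj b v v' z hv hv' := by
    rcases eq_or_ne b a with rfl | hb
    · rw [mk_mem_insert_mk_iff, Prod.mk.injEq] at hv hv'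
      rcases hv with ⟨rfl, rfl⟩ | hv <;> rcases hv' with ⟨rfl, h⟩ | hv'
      · rfl
      · exact absurd ⟨v', hv'⟩ hx
      · exact absurd ⟨v, hv⟩ (h ▸ hx)
      · exact hs.inj hv hv'
    · rw [mk_mem_insert_mk_of_ne hb] at hv hv'
      exact hs.inj hv hv'
  avoid b v z hz := by
    rcases eq_or_ne b a with rfl | hb
    · rcases mk_mem_insert_mk_iff.1 hz with h | hz
      · exact (Prod.mk.inj h).2 ▸ hxH
      · exact hs.avoid hz
    · exact hs.avoid ((mk_mem_insert_mk_of_ne hb).1 hz)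
  disj b c e he he' := by
    have old_or_new : ∀ {b}, e ∈ edgeImage F (Insert.insert ⟨a, (u, x)⟩ s) b →
        e ∈ edgeImage F s b ∨
          b = a ∧ ∃ w y, (F a).Adj u w ∧ ⟨a, (w, y)⟩ ∈ s ∧ s(x, y) = e := by
      intro b he
      rcases eq_or_ne b a with rfl | hb
      · exact (mem_edgeImage_insert he).imp_right fun h => ⟨rfl, h⟩
      · exact Or.inl (by rwa [edgeImage_insert_of_ne hb] at he)
    rcases old_or_new he with hb | ⟨rfl, w, y, hadj, hw, rfl⟩ <;>
      rcases old_or_new he' with hc | ⟨rfl, w', y', hadj', hw', he''⟩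
    · exact hs.disj hb hc
    · by_contra hba
      exact hnew hadj' hw' b hba (he'' ▸ hb)
    · by_contra hca
      exact hnew hadj hw c (Ne.symm hca) hc
    · rfl

theorem isPacking_sUnion {S : Set (Set (Σ a, V a × X))} (hS : IsChain (· ⊆ ·) S)
    (h : ∀ s ∈ S, IsPacking F H s) : IsPacking F H (⋃₀ S) := by
  have two : ∀ {p q}, p ∈ ⋃₀ S → q ∈ ⋃₀ S → ∃ s ∈ S, p ∈ s ∧ q ∈ s := by
    rintro p q ⟨s, hs, hp⟩ ⟨t, ht, hq⟩
    rcases hS.total hs ht with hst | hts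
    exacts [⟨t, ht, hst hp, hq⟩, ⟨s, hs, hp, hts hq⟩]
  have edge : ∀ {a e}, e ∈ edgeImage F (⋃₀ S) a → ∃ s ∈ S, e ∈ edgeImage F s a := by
    rintro a _ ⟨u, w, x, y, hadj, hu, hw, rfl⟩
    obtain ⟨s, hs, hu, hw⟩ := two hu hw
    exact ⟨s, hs, u, w, x, y, hadj, hu, hw, rfl⟩
  refine ⟨fun a u x x' hx hx' => ?_, fun a u u' x hu hu' => ?_, fun a u x hx => ?_,
    fun a b e ha hb => ?_⟩
  · obtain ⟨s, hs, hx, hx'⟩ := two hx hx'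
    exact (h s hs).func hx hx'
  · obtain ⟨s, hs, hu, hu'⟩ := two hu hu'
    exact (h s hs).inj hu hu'
  · obtain ⟨s, hs, hx⟩ := hx
    exact (h s hs).avoid hx
  · obtain ⟨s, hs, ha⟩ := edge ha
    obtain ⟨t, ht, hb⟩ := edge hb
    rcases hS.total hs ht with hst | hts
    exacts [(h t ht).disj (edgeImage_mono hst ha) hb,
      (h s hs).disj ha (edgeImage_mono hts hb)]

theorem exists_extension_place (hs : IsPacking F H s) (hsH : #s < #↥(H a)ᶜ) (u : V a) :
    ∃ s', IsSmallExtension 2 s s' ∧ IsPacking F H s' ∧ u ∈ dom s' a := by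
  by_cases hu : u ∈ dom s a
  · exact ⟨s, isSmallExtension_refl, hs, hu⟩
  obtain ⟨y, hyH, hy⟩ : ∃ y ∈ (H a)ᶜ, y ∉ touched s :=
    Set.not_subset.1 fun h => ((mk_le_mk_of_subset h).trans mk_image_le).not_gt hsH
  refine ⟨_, isSmallExtension_insert, hs.insert hu (fun h => hy (ran_subset_touched h)) hyH ?_,
    y, Set.mem_insert _ _⟩
  intro _ _ _ _ b _ he
  exact hy (ran_subset_touched (mem_ran_of_mem_edgeImage he (Sym2.mem_mk_left _ _)))

theorem exists_extension_hit {κ : Cardinal.{u}} (hs : IsPacking F H s)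
    (hdom : ∀ D, IsDominatingSet (F a) D → κ ≤ #D) (hsκ : #s < κ) {x : X} (hxH : x ∉ H a) :
    ∃ s', IsSmallExtension 2 s s' ∧ IsPacking F H s' ∧ x ∈ ran s' a := by
  by_cases hx : x ∈ ran s a
  · exact ⟨s, isSmallExtension_refl, hs, hx⟩
  have hnd : ¬ IsDominatingSet (F a) (dom s a) := fun hD =>
    ((hdom _ hD).trans mk_dom_le).not_gt hsκ
  simp only [IsDominatingSet, not_forall, not_exists, not_and] at hnd
  obtain ⟨u, hu, hnadj⟩ := hnd
  refine ⟨_, isSmallExtension_insert, hs.insert hu hx hxH ?_, u, Set.mem_insert _ _⟩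
  exact fun w _ hadj hw => absurd hadj (hnadj w ⟨_, hw⟩)

theorem exists_extension_cover (hs : IsPacking F H s) (hF : ∀ a, (F a).edgeSet.Nonempty)
    (hH : Pairwise (Disjoint on H)) (hA : ℵ₀ ≤ #A) (hsA : #s < #A) {x y : X} (hxy : x ≠ y) :
    ∃ s', IsSmallExtension 2 s s' ∧ IsPacking F H s' ∧ ∃ a, s(x, y) ∈ edgeImage F s' a := by
  by_cases hcov : ∃ a, s(x, y) ∈ edgeImage F s a
  · exact ⟨s, isSmallExtension_refl, hs, hcov⟩
  push Not at hcov
  obtain ⟨a, ha, hxa, hya⟩ : ∃ a, a ∉ used s ∧ x ∉ H a ∧ y ∉ H a := by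
    have hfew : ∀ z : X, #↥{a | z ∈ H a} < #A := fun z =>
      (mk_le_one_iff_set_subsingleton.2 fun a ha b hb => by_contra fun hab =>
        Set.disjoint_left.1 (hH hab) ha hb).trans_lt (one_lt_aleph0.trans_le hA)
    have hbad : #↥(used s ∪ {a | x ∈ H a} ∪ {a | y ∈ H a}) < #A :=
      (mk_union_le _ _).trans_lt <| add_lt_of_lt hA
        ((mk_union_le _ _).trans_lt (add_lt_of_lt hA (mk_image_le.trans_lt hsA) (hfew x)))
        (hfew y)
    obtain ⟨a, ha⟩ := (Set.nonempty_compl (s := used s ∪ {a | x ∈ H a} ∪ {a | y ∈ H a})).2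
      fun h => by rw [h, mk_univ] at hbad; exact hbad.false
    simp only [Set.mem_compl_iff, Set.mem_union, Set.mem_ofPred_eq, not_or] at ha
    exact ⟨a, ha.1.1, ha.1.2, ha.2⟩
  obtain ⟨e, he⟩ := hF a
  induction e using Sym2.ind with | h u w => ?_
  -- send a fixed edge `uw` of the unused graph `F a` onto `xy`
  have hs₁ : IsPacking F H (insert ⟨a, (w, y)⟩ s) :=
    hs.insert (fun ⟨_, h⟩ => notMem_of_notMem_used ha h)
      (fun ⟨_, h⟩ => notMem_of_notMem_used ha h) hya
      fun _ _ _ h => absurd h (notMem_of_notMem_used ha)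
  refine ⟨_, isSmallExtension_insert_insert, hs₁.insert ?_ ?_ hxa ?_,
    a, u, w, x, y, he, Set.mem_insert _ _, Set.mem_insert_of_mem _ (Set.mem_insert _ _), rfl⟩
  · rintro ⟨z, hz⟩
    rcases mk_mem_insert_mk_iff.1 hz with h | h
    exacts [he.ne (Prod.mk.inj h).1, notMem_of_notMem_used ha h]
  · rintro ⟨v, hv⟩
    rcases mk_mem_insert_mk_iff.1 hv with h | h
    exacts [hxy (Prod.mk.inj h).2, notMem_of_notMem_used ha h]
  · intro w' y' _ hw' b hb hb'
    rw [edgeImage_insert_of_ne hb] at hb'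
    rcases mk_mem_insert_mk_iff.1 hw' with h | h
    · obtain ⟨rfl, rfl⟩ := Prod.mk.inj h
      exact hcov b hb'
    · exact notMem_of_notMem_used ha h

inductive Task (A : Type u) (V : A → Type u) (X : Type u) : Type u
  | cover (x y : X)
  | hit (a : A) (x : X)
  | place (a : A) (u : V a)

variable (F) in
def Task.IsDone : Task A V X → Set (Σ a, V a × X) → Prop
  | .cover x y, s => ∃ a, s(x, y) ∈ edgeImage F s a
  | .hit a x, s => x ∈ ran s a
  | .place a u, s => u ∈ dom s a

theorem Task.monotone_isDone (t : Task A V X) : Monotone (t.IsDone F) := by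
  intro s s' h
  cases t with
  | cover x y => exact fun ⟨a, ha⟩ => ⟨a, edgeImage_mono h ha⟩
  | hit a x => exact fun ⟨u, hu⟩ => ⟨u, h hu⟩
  | place a u => exact fun ⟨x, hx⟩ => ⟨x, h hx⟩

theorem mk_task_le {κ : Cardinal.{u}} (hκ : ℵ₀ ≤ κ) (hA : #A ≤ κ) (hV : ∀ a, #(V a) ≤ κ)
    (hX : #X ≤ κ) : #(Task A V X) ≤ κ := by
  have hsurj : Surjective (Sum.elim (fun p : X × X => Task.cover (V := V) p.1 p.2)
      (Sum.elim (fun p : A × X => Task.hit p.1 p.2)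
        fun p : Σ a, V a => Task.place p.1 p.2)) := by
    rintro (⟨x, y⟩ | ⟨a, x⟩ | ⟨a, u⟩)
    exacts [⟨.inl (x, y), rfl⟩, ⟨.inr (.inl (a, x)), rfl⟩, ⟨.inr (.inr ⟨a, u⟩), rfl⟩]
  refine (mk_le_of_surjective hsurj).trans ?_
  simp only [mk_sum, mk_prod, mk_sigma, lift_id]
  calc _ ≤ κ * κ + (κ * κ + κ) := by gcongr; exact sum_le_of_forall_le hκ hA hV
    _ = κ := by simp [mul_eq_self hκ, add_eq_self hκ]

variable (F H) in
theorem exists_isPacking_complete {κ : Cardinal.{u}} (hκ : ℵ₀ ≤ κ) (hA : #A = κ)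
    (hV : ∀ a, #(V a) ≤ κ) (hX : #X = κ) (hF : ∀ a, (F a).edgeSet.Nonempty)
    (hH : Pairwise (Disjoint on H)) (hHc : ∀ a, #↥(H a)ᶜ = κ) :
    ∃ s, IsPacking F H s ∧ (∀ a (u : V a), u ∈ dom s a) ∧
      (∀ x y : X, x ≠ y → ∃ a, s(x, y) ∈ edgeImage F s a) ∧
      ∀ a, (∀ D, IsDominatingSet (F a) D → κ ≤ #D) → ∀ x ∉ H a, x ∈ ran s a := by
  obtain ⟨s, hs, hdone⟩ := exists_forall_done_of_forall_exists_extension (IsPacking F H)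
    (Task.IsDone F) hκ (mk_task_le hκ hA.le hV hX.le) 2 (fun _ => isPacking_sUnion)
    Task.monotone_isDone
  refine ⟨s, hs, fun a u => hdone (.place a u) fun b hb hbκ => ?_,
    fun x y hxy => hdone (.cover x y) fun b hb hbκ => ?_,
    fun a ha x hx => hdone (.hit a x) fun b hb hbκ => ?_⟩
  · exact exists_extension_place hb (hHc a ▸ hbκ) u
  · exact exists_extension_cover hb hF hH (hA ▸ hκ) (hA ▸ hbκ) hxy
  · exact exists_extension_hit hb ha hbκ hx

theorem IsPacking.exists_embedding (hs : IsPacking F H s)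
    (hdom : ∀ a (u : V a), u ∈ dom s a) :
    ∃ f : ∀ a, V a ↪ X, ∀ a u x, ⟨a, (u, x)⟩ ∈ s ↔ f a u = x := by
  choose f hf using hdom
  exact ⟨fun a => ⟨f a, fun u u' h => hs.inj (hf a u) (h ▸ hf a u')⟩,
    fun a u x => ⟨hs.func (hf a u), fun h => h ▸ hf a u⟩⟩

theorem ran_eq_range {f : ∀ a, V a ↪ X} (hf : ∀ a u x, ⟨a, (u, x)⟩ ∈ s ↔ f a u = x)
    (a : A) : ran s a = Set.range (f a) := by
  ext x
  simp [ran, hf]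

theorem edgeImage_eq_image {f : ∀ a, V a ↪ X} (hf : ∀ a u x, ⟨a, (u, x)⟩ ∈ s ↔ f a u = x)
    (a : A) : edgeImage F s a = Sym2.map (f a) '' (F a).edgeSet := by
  ext e
  simp [edgeImage, hf, Sym2.exists]

theorem IsPacking.disjoint_ran (hs : IsPacking F H s) (a : A) : Disjoint (H a) (ran s a) :=
  Set.disjoint_right.2 fun _ ⟨_, h⟩ => hs.avoid h

theorem IsPacking.isDecomposition (hs : IsPacking F H s) {f : ∀ a, V a ↪ X}
    (hf : ∀ a u x, ⟨a, (u, x)⟩ ∈ s ↔ f a u = x)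
    (hcov : ∀ x y : X, x ≠ y → ∃ a, s(x, y) ∈ edgeImage F s a) :
    IsDecomposition fun a => (SimpleGraph.Copy.toTop (F a) (f a)).toSubgraph := by
  intro e he
  induction e using Sym2.ind with | h x y => ?_
  simp only [SimpleGraph.Copy.edgeSet_toSubgraph_toTop, ← edgeImage_eq_image hf]
  obtain ⟨a, ha⟩ := hcov x y he
  exact ⟨a, ha, fun b hb => hs.disj hb ha⟩

end GraphPacking

open GraphPacking

/-- let `𝓕 = {F a : a ∈ A}` be a family of non-empty graphs, each of
order at most `ℵ`, with `|A| = ℵ` infinite. For each `a` choose a cardinal `ℵc a`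
with `ℵc a = ℵ` whenever the domination number of `F a` is `< ℵ`, and `ℵc a ≤ ℵ`
arbitrary otherwise. Then there is a decomposition `{Γ a : a ∈ A}` of the complete
graph `K_ℵ` with `Γ a ≅ F a` and `|V(K_ℵ) \ V(Γ a)| = ℵc a` for every `a`. -/
theorem stmt_17 {A : Type u} (ℵ : Cardinal.{u}) (hℵ : Cardinal.aleph0 ≤ ℵ)
    (hA : Cardinal.mk A = ℵ)
    (V : A → Type u) (hV : ∀ a, Cardinal.mk (V a) ≤ ℵ)
    (F : ∀ a, SimpleGraph (V a)) (hne : ∀ a, (F a).edgeSet.Nonempty)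
    (ℵc : A → Cardinal.{u}) (hcle : ∀ a, ℵc a ≤ ℵ)
    (hforced : ∀ a, (∃ D : Set (V a), IsDominatingSet (F a) D ∧ Cardinal.mk ↥D < ℵ) →
      ℵc a = ℵ)
    (X : Type u) (hX : Cardinal.mk X = ℵ) :
    ∃ G : A → (⊤ : SimpleGraph X).Subgraph, IsDecomposition G ∧
      ∀ a, Nonempty (F a ≃g (G a).coe) ∧ Cardinal.mk ↥((G a).vertsᶜ) = ℵc a := by
  obtain ⟨H, hH, hHcard, hHc⟩ :=
    exists_pairwise_disjoint_mk_eq hℵ hX ℵc (sum_le_of_forall_le hℵ hA.le hcle)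
  obtain ⟨s, hs, hdom, hcov, hran⟩ := exists_isPacking_complete F H hℵ hA hV hX hne hH hHc
  obtain ⟨f, hf⟩ := hs.exists_embedding hdom
  refine ⟨_, hs.isDecomposition hf hcov,
    fun a => ⟨⟨SimpleGraph.Copy.isoToSubgraph _⟩, ?_⟩⟩
  rw [SimpleGraph.Copy.verts_toSubgraph_toTop, ← ran_eq_range hf]
  have hHsub : H a ⊆ (ran s a)ᶜ := (hs.disjoint_ran a).subset_compl_right
  rcases (hcle a).lt_or_eq with hlt | heq
  · have hbig : ∀ D, IsDominatingSet (F a) D → ℵ ≤ #D := fun D hD =>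
      not_lt.1 fun hD' => hlt.ne (hforced a ⟨D, hD, hD'⟩)
    rw [← hHcard a, hHsub.antisymm fun x hx => by_contra fun hxH => hx (hran a hbig x hxH)]
  · refine le_antisymm ((mk_set_le _).trans (hX.trans heq.symm).le) ?_
    exact hHcard a ▸ mk_le_mk_of_subset hHsub
end

section
/- Let ℵ be an infinite cardinal and let G be a decomposition of the complete graph K_ℵ such that for some cardinal ℵ' < ℵ the following hold: (R1) every graph in G has order at most ℵ'; and (R2) for every two distinct vertices x, y of K_ℵ, the set G(x) ∩ G(y) of graphs of G containing both x and y has cardinality at most ℵ'. Then G is resolvable, i.e., G can be partitioned into resolution classes. -/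
universe u

/-- A set `𝒢` of subgraphs of `Λ` is a decomposition of `Λ`: the edge sets of the
members of `𝒢` partition the edge set of `Λ`. -/
def IsDecompositionSet {V : Type*} (Λ : SimpleGraph V) (𝒢 : Set Λ.Subgraph) : Prop :=
  ∀ e ∈ Λ.edgeSet, ∃! Γ, Γ ∈ 𝒢 ∧ e ∈ Γ.edgeSet

/-- A resolution class: a set of pairwise vertex-disjoint subgraphs whose vertex
sets together cover all the vertices. -/
def IsResolutionClass {V : Type*} {Λ : SimpleGraph V} (C : Set Λ.Subgraph) : Prop :=
  (C.Pairwise fun Γ₁ Γ₂ => Disjoint Γ₁.verts Γ₂.verts) ∧ ∀ x : V, ∃ Γ ∈ C, x ∈ Γ.verts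

/-- A decomposition `𝒢` is resolvable if it can be partitioned into resolution
classes. -/
def IsResolvable {V : Type*} {Λ : SimpleGraph V} (𝒢 : Set Λ.Subgraph) : Prop :=
  ∃ P : Set (Set Λ.Subgraph), ⋃₀ P = 𝒢 ∧ P.PairwiseDisjoint id ∧
    ∀ C ∈ P, IsResolutionClass C

/-!
Index the resolution classes by the initial ordinal of `ℵ` and enumerate, in order type `ℵ`,
the tasks "class `k` covers the vertex `x`" and "the member `Γ` lies in some class". A
transfinite recursion treats the tasks in turn, each time adding at most one fresh member to
one class while keeping that class vertex-disjoint. Before any step fewer than `ℵ` members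
have been placed, so by (R1) each class covers fewer than `ℵ` vertices, and by (R2) fewer
than `ℵ` members through `x` meet them. On the other hand at least `ℵ` members pass through
`x`, since they cover the `ℵ` edges at `x` with at most `ℵ'` vertices each. So every task of
the first kind can be fulfilled, and an unused class serves a task of the second kind. There
are only `ℵ` tasks because (R2) bounds the members with two vertices and a member with at
most one vertex is determined by its vertex set.
-/

open Cardinal Set

theorem Cardinal.mk_iUnion_le_mk_mul {α ι : Type u} {t : ι → Set α} {c : Cardinal.{u}}
    (ht : ∀ i, #(t i) ≤ c) : #(⋃ i, t i) ≤ #ι * c :=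
  (mk_iUnion_le t).trans (by gcongr; exact ciSup_le' ht)

theorem Cardinal.mk_iUnion_lt {α ι : Type u} {t : ι → Set α} {c c' : Cardinal.{u}}
    (hc : ℵ₀ ≤ c) (hι : #ι < c) (hc' : c' < c) (ht : ∀ i, #(t i) ≤ c') : #(⋃ i, t i) < c :=
  (mk_iUnion_le_mk_mul ht).trans_lt (mul_lt_of_lt hc hι hc')

section Greedy

variable {A β : Type u} [LinearOrder A] [WellFoundedLT A]

def history (g : A → Option β) (a : A) : Set β := {p | ∃ b < a, g b = some p}

omit [WellFoundedLT A] in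
theorem mk_history_le (g : A → Option β) (a : A) : #(history g a) ≤ #(Iio a) :=
  calc #(history g a) ≤ #(some ⁻¹' (g '' Iio a)) :=
        mk_le_mk_of_subset fun _ ⟨b, hb, hgb⟩ => ⟨b, hb, hgb⟩
    _ ≤ #(g '' Iio a) := mk_preimage_of_injective _ _ (Option.some_injective _)
    _ ≤ #(Iio a) := mk_image_le

variable (task : A → Set β) (valid : Set β → β → Prop)

open scoped Classical in
noncomputable def greedy : A → Option β :=
  WellFoundedLT.fix fun a prior =>
    if h : ∃ p ∈ task a, valid {p | ∃ b, ∃ hb : b < a, prior b hb = some p} p then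
      some h.choose
    else none

open scoped Classical in
theorem greedy_eq (a : A) : greedy task valid a =
    if h : ∃ p ∈ task a, valid (history (greedy task valid) a) p then some h.choose else none := by
  conv_lhs => rw [greedy, WellFoundedLT.fix_eq]
  simp only [history, exists_prop]
  rfl

variable {task valid}

theorem valid_of_greedy_eq_some {a : A} {p : β} (h : greedy task valid a = some p) :
    valid (history (greedy task valid) a) p := by
  rw [greedy_eq] at h
  split_ifs at h with hex
  exact Option.some_injective _ h ▸ hex.choose_spec.2

theorem exists_greedy_eq_some_mem {a : A}
    (h : (∃ p ∈ task a, p ∈ history (greedy task valid) a) ∨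
      ∃ p ∈ task a, valid (history (greedy task valid) a) p) :
    ∃ b, ∃ p ∈ task a, greedy task valid b = some p := by
  obtain ⟨p, hp, b, -, hb⟩ | hex := h
  · exact ⟨b, p, hp, hb⟩
  · refine ⟨a, hex.choose, hex.choose_spec.1, ?_⟩
    rw [greedy_eq, dif_pos hex]

end Greedy

section Resolution

variable {A ι X : Type u} (𝒢 : Set ι) (V : ι → Set X)

def classVerts (H : Set (A × ι)) (k : A) : Set X := ⋃ i ∈ {i | (k, i) ∈ H}, V i

def IsAdmissible (H : Set (A × ι)) (p : A × ι) : Prop :=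
  p.2 ∈ 𝒢 ∧ p.2 ∉ Prod.snd '' H ∧ Disjoint (V p.2) (classVerts V H p.1)

/-- Task `(k, x)` asks class `k` to cover `x`; task `i` asks that `i` be put into some class. -/
def demand : (A × X) ⊕ 𝒢 → Set (A × ι)
  | .inl (k, x) => {p | p.1 = k ∧ x ∈ V p.2}
  | .inr i => {p | p.2 = i}

variable {ℵ ℵ' : Cardinal.{u}} {H : Set (A × ι)}

theorem mk_classVerts_lt (hℵ : ℵ₀ ≤ ℵ) (hℵ' : ℵ' < ℵ) (hR1 : ∀ i ∈ 𝒢, #(V i) ≤ ℵ')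
    (hH : #H < ℵ) (hH𝒢 : ∀ p ∈ H, p.2 ∈ 𝒢) (k : A) : #(classVerts V H k) < ℵ := by
  have hsub : classVerts V H k ⊆ ⋃ p : H, V p.1.2 := by
    simp only [classVerts, iUnion_subset_iff]
    exact fun i hi => subset_iUnion_of_subset ⟨(k, i), hi⟩ subset_rfl
  exact (mk_le_mk_of_subset hsub).trans_lt
    (mk_iUnion_lt hℵ hH hℵ' fun p => hR1 _ (hH𝒢 p.1 p.2))

theorem exists_admissible_mem_verts (hℵ : ℵ₀ ≤ ℵ) (hℵ' : ℵ' < ℵ)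
    (hR1 : ∀ i ∈ 𝒢, #(V i) ≤ ℵ')
    (hR2 : ∀ x y, x ≠ y → #{i ∈ 𝒢 | x ∈ V i ∧ y ∈ V i} ≤ ℵ')
    (hdeg : ∀ x, ℵ ≤ #{i ∈ 𝒢 | x ∈ V i})
    (hH : #H < ℵ) (hH𝒢 : ∀ p ∈ H, p.2 ∈ 𝒢) {k : A} {x : X} (hx : x ∉ classVerts V H k) :
    ∃ i, x ∈ V i ∧ IsAdmissible 𝒢 V H (k, i) := by
  set W := classVerts V H k
  set bad := Prod.snd '' H ∪ ⋃ y : W, {i ∈ 𝒢 | x ∈ V i ∧ y.1 ∈ V i}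
  have hbad : #bad < ℵ := by
    refine (mk_union_le _ _).trans_lt (add_lt_of_lt hℵ (mk_image_le.trans_lt hH) ?_)
    refine mk_iUnion_lt hℵ (mk_classVerts_lt 𝒢 V hℵ hℵ' hR1 hH hH𝒢 k) hℵ' fun y => ?_
    exact hR2 x y.1 fun h => hx (h ▸ y.2)
  obtain ⟨i, ⟨hi𝒢, hxi⟩, hibad⟩ := not_subset.1 fun h : {i ∈ 𝒢 | x ∈ V i} ⊆ bad =>
    (hdeg x).not_gt ((mk_le_mk_of_subset h).trans_lt hbad)
  refine ⟨i, hxi, hi𝒢, fun h => hibad (Or.inl h), disjoint_left.2 fun y hyi hyW => ?_⟩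
  exact hibad (Or.inr (mem_iUnion.2 ⟨⟨y, hyW⟩, hi𝒢, hxi, hyi⟩))

theorem exists_admissible_of_notMem (hH : #H < #A) {i : ι} (hi𝒢 : i ∈ 𝒢)
    (hi : i ∉ Prod.snd '' H) : ∃ k, IsAdmissible 𝒢 V H (k, i) := by
  obtain ⟨k, hk⟩ : (Prod.fst '' H)ᶜ.Nonempty := by
    rw [nonempty_compl]
    rintro h
    exact (mk_image_le.trans_lt hH).ne (by rw [h, mk_univ])
  refine ⟨k, hi𝒢, hi, disjoint_right.2 fun y hy _ => ?_⟩
  obtain ⟨j, hj, -⟩ := mem_iUnion₂.1 hy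
  exact hk ⟨(k, j), hj, rfl⟩

theorem exists_demand_mem_or_admissible (hℵ : ℵ₀ ≤ ℵ) (hℵ' : ℵ' < ℵ) (hA : #A = ℵ)
    (hR1 : ∀ i ∈ 𝒢, #(V i) ≤ ℵ')
    (hR2 : ∀ x y, x ≠ y → #{i ∈ 𝒢 | x ∈ V i ∧ y ∈ V i} ≤ ℵ')
    (hdeg : ∀ x, ℵ ≤ #{i ∈ 𝒢 | x ∈ V i})
    (hH : #H < ℵ) (hH𝒢 : ∀ p ∈ H, p.2 ∈ 𝒢) (t : (A × X) ⊕ 𝒢) :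
    (∃ p ∈ demand 𝒢 V t, p ∈ H) ∨ ∃ p ∈ demand 𝒢 V t, IsAdmissible 𝒢 V H p := by
  rcases t with ⟨k, x⟩ | ⟨i, hi𝒢⟩
  · by_cases hx : x ∈ classVerts V H k
    · obtain ⟨i, hi, hxi⟩ := mem_iUnion₂.1 hx
      exact Or.inl ⟨(k, i), ⟨rfl, hxi⟩, hi⟩
    · obtain ⟨i, hxi, hadm⟩ := exists_admissible_mem_verts 𝒢 V hℵ hℵ' hR1 hR2 hdeg hH hH𝒢 hx
      exact Or.inr ⟨(k, i), ⟨rfl, hxi⟩, hadm⟩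
  · by_cases hi : i ∈ Prod.snd '' H
    · obtain ⟨p, hp, rfl⟩ := hi
      exact Or.inl ⟨p, rfl, hp⟩
    · obtain ⟨k, hadm⟩ := exists_admissible_of_notMem 𝒢 V (hA ▸ hH) hi𝒢 hi
      exact Or.inr ⟨(k, i), rfl, hadm⟩

end Resolution

section GreedyResolution

variable {A ι X : Type u} [LinearOrder A] [WellFoundedLT A] {𝒢 : Set ι} {V : ι → Set X}
  {task : A → Set (A × ι)}

theorem history_greedy_snd_mem {a : A} {p : A × ι}
    (hp : p ∈ history (greedy task (IsAdmissible 𝒢 V)) a) : p.2 ∈ 𝒢 :=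
  let ⟨_, _, hb⟩ := hp
  (valid_of_greedy_eq_some hb).1

variable (𝒢 V task) in
def greedyClass (k : A) : Set ι := {i | ∃ a, greedy task (IsAdmissible 𝒢 V) a = some (k, i)}

theorem greedyClass_subset (k : A) : greedyClass 𝒢 V task k ⊆ 𝒢 :=
  fun _ ⟨_, ha⟩ => (valid_of_greedy_eq_some ha).1

theorem pairwiseDisjoint_range_greedyClass :
    (range (greedyClass 𝒢 V task)).PairwiseDisjoint id := by
  rintro _ ⟨k, rfl⟩ _ ⟨k', rfl⟩ hne
  refine disjoint_left.2 fun i ⟨a, ha⟩ ⟨a', ha'⟩ => hne ?_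
  obtain rfl : a = a' := by
    by_contra hne
    rcases lt_or_gt_of_ne hne with hlt | hlt
    · exact (valid_of_greedy_eq_some ha').2.1 ⟨(k, i), ⟨a, hlt, ha⟩, rfl⟩
    · exact (valid_of_greedy_eq_some ha).2.1 ⟨(k', i), ⟨a', hlt, ha'⟩, rfl⟩
  obtain rfl : k = k' := congrArg Prod.fst (Option.some_injective _ (ha.symm.trans ha'))
  rfl

theorem greedyClass_pairwise_disjoint (k : A) :
    (greedyClass 𝒢 V task k).Pairwise fun i j => Disjoint (V i) (V j) := by
  have key {a a' : A} {i j : ι} (hlt : a < a')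
      (ha : greedy task (IsAdmissible 𝒢 V) a = some (k, i))
      (ha' : greedy task (IsAdmissible 𝒢 V) a' = some (k, j)) : Disjoint (V i) (V j) :=
    ((valid_of_greedy_eq_some ha').2.2.mono_right
      (subset_biUnion_of_mem (u := V) (show (k, i) ∈ history _ a' from ⟨a, hlt, ha⟩))).symm
  rintro i ⟨a, ha⟩ j ⟨a', ha'⟩ hne
  rcases lt_trichotomy a a' with hlt | rfl | hlt
  · exact key hlt ha ha'
  · exact absurd (congrArg Prod.snd (Option.some_injective _ (ha.symm.trans ha'))) hne
  · exact (key hlt ha' ha).symm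

end GreedyResolution

theorem exists_partition_resolution_classes {ι X : Type u} (𝒢 : Set ι) (V : ι → Set X)
    {ℵ ℵ' : Cardinal.{u}} (hℵ : ℵ₀ ≤ ℵ) (hℵ' : ℵ' < ℵ) (hX : #X ≤ ℵ) (h𝒢 : #𝒢 ≤ ℵ)
    (hR1 : ∀ i ∈ 𝒢, #(V i) ≤ ℵ')
    (hR2 : ∀ x y, x ≠ y → #{i ∈ 𝒢 | x ∈ V i ∧ y ∈ V i} ≤ ℵ')
    (hdeg : ∀ x, ℵ ≤ #{i ∈ 𝒢 | x ∈ V i}) :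
    ∃ P : Set (Set ι), ⋃₀ P = 𝒢 ∧ P.PairwiseDisjoint id ∧
      ∀ C ∈ P, C.Pairwise (fun i j => Disjoint (V i) (V j)) ∧ ∀ x, ∃ i ∈ C, x ∈ V i := by
  let A := ℵ.ord.ToType
  have hA : #A = ℵ := mk_ord_toType ℵ
  have hIio (a : A) : #(Iio a) < ℵ :=
    (mk_Iio_lt a (by rw [hA]; exact (Ordinal.type_toType _).symm)).trans_eq hA
  obtain ⟨f⟩ : Nonempty ((A × X) ⊕ 𝒢 ↪ A) := by
    rw [← le_def, mk_sum, mk_prod]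
    simp only [lift_id, hA]
    calc ℵ * #X + #𝒢 ≤ ℵ * ℵ + ℵ := by gcongr
      _ = ℵ := by rw [mul_eq_self hℵ, add_eq_self hℵ]
  -- step `f t` of the recursion serves the task `t`
  let task := Function.extend f (demand 𝒢 V) fun _ => ∅
  have hdone (t) : ∃ a, ∃ p ∈ demand 𝒢 V t, greedy task (IsAdmissible 𝒢 V) a = some p := by
    have htask : task (f t) = demand 𝒢 V t := f.injective.extend_apply _ _ t
    rw [← htask]
    exact exists_greedy_eq_some_mem (htask ▸ exists_demand_mem_or_admissible 𝒢 V hℵ hℵ' hA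
      hR1 hR2 hdeg ((mk_history_le _ _).trans_lt (hIio _)) (fun _ => history_greedy_snd_mem) t)
  refine ⟨range (greedyClass 𝒢 V task), ?_, pairwiseDisjoint_range_greedyClass, ?_⟩
  · refine subset_antisymm (sUnion_subset ?_) fun i hi => ?_
    · rintro _ ⟨k, rfl⟩
      exact greedyClass_subset k
    · obtain ⟨a, ⟨k, i'⟩, rfl, ha⟩ := hdone (.inr ⟨i, hi⟩)
      exact ⟨_, ⟨k, rfl⟩, a, ha⟩
  · rintro _ ⟨k, rfl⟩
    refine ⟨greedyClass_pairwise_disjoint k, fun x => ?_⟩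
    obtain ⟨a, ⟨k', i⟩, ⟨rfl, hxi⟩, ha⟩ := hdone (.inl (k, x))
    exact ⟨i, ⟨a, ha⟩, hxi⟩

namespace SimpleGraph.Subgraph

variable {X : Type u} {G : SimpleGraph X}

theorem injOn_verts_setOf_subsingleton : InjOn verts {Γ : G.Subgraph | Γ.verts.Subsingleton} := by
  intro Γ hΓ Δ hΔ h
  refine Subgraph.ext h (funext₂ fun u v => propext ⟨fun huv => ?_, fun huv => ?_⟩)
  · exact absurd (hΓ huv.fst_mem huv.snd_mem) huv.ne
  · exact absurd (hΔ huv.fst_mem huv.snd_mem) huv.ne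

theorem mk_le_of_mk_setOf_pair_le (𝒢 : Set G.Subgraph) {ℵ ℵ' : Cardinal.{u}}
    (hℵ : ℵ₀ ≤ ℵ) (hX : #X ≤ ℵ) (hℵ' : ℵ' ≤ ℵ)
    (hR2 : ∀ x y, x ≠ y → #{Γ ∈ 𝒢 | x ∈ Γ.verts ∧ y ∈ Γ.verts} ≤ ℵ') : #𝒢 ≤ ℵ := by
  have hsub : 𝒢 ⊆ (⋃ p : {p : X × X // p.1 ≠ p.2}, {Γ ∈ 𝒢 | p.1.1 ∈ Γ.verts ∧ p.1.2 ∈ Γ.verts}) ∪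
      {Γ | Γ.verts.Subsingleton} := by
    intro Γ hΓ
    by_cases h : Γ.verts.Subsingleton
    · exact Or.inr h
    · obtain ⟨x, hx, y, hy, hxy⟩ := not_subsingleton_iff.1 h
      exact Or.inl (mem_iUnion.2 ⟨⟨(x, y), hxy⟩, hΓ, hx, hy⟩)
  have hpairs : #{p : X × X // p.1 ≠ p.2} ≤ ℵ :=
    calc #{p : X × X // p.1 ≠ p.2} ≤ #X * #X :=
          (mk_subtype_le _).trans_eq (by rw [mk_prod, lift_id])
      _ ≤ ℵ * ℵ := by gcongr
      _ = ℵ := mul_eq_self hℵ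
  have hsingle : #{Γ : G.Subgraph | Γ.verts.Subsingleton} ≤ ℵ :=
    calc #{Γ : G.Subgraph | Γ.verts.Subsingleton}
        = #(verts '' {Γ : G.Subgraph | Γ.verts.Subsingleton}) :=
          (mk_image_eq_of_injOn _ _ injOn_verts_setOf_subsingleton).symm
      _ ≤ #(insert ∅ (range singleton) : Set (Set X)) := by
          refine mk_le_mk_of_subset ?_
          rintro _ ⟨Γ, hΓ, rfl⟩
          obtain h | ⟨x, hx⟩ := hΓ.eq_empty_or_singleton
          exacts [Or.inl h, Or.inr ⟨x, hx.symm⟩]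
      _ ≤ #X + 1 := mk_insert_le.trans (add_le_add_left mk_range_le 1)
      _ ≤ ℵ + ℵ := add_le_add hX (one_le_aleph0.trans hℵ)
      _ = ℵ := add_eq_self hℵ
  calc #𝒢 ≤ #{p : X × X // p.1 ≠ p.2} * ℵ' + ℵ :=
        (mk_le_mk_of_subset hsub).trans ((mk_union_le _ _).trans
          (add_le_add (mk_iUnion_le_mk_mul fun p => hR2 _ _ p.2) hsingle))
    _ ≤ ℵ * ℵ + ℵ := by gcongr
    _ = ℵ := by rw [mul_eq_self hℵ, add_eq_self hℵ]

theorem le_mk_setOf_mem_verts {𝒢 : Set (⊤ : SimpleGraph X).Subgraph}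
    (hdec : IsDecompositionSet ⊤ 𝒢) {ℵ ℵ' : Cardinal.{u}} (hℵ : ℵ₀ ≤ ℵ) (hX : #X = ℵ)
    (hℵ' : ℵ' < ℵ) (hR1 : ∀ Γ ∈ 𝒢, #Γ.verts ≤ ℵ') (x : X) :
    ℵ ≤ #{Γ ∈ 𝒢 | x ∈ Γ.verts} := by
  by_contra! hlt
  have hcov : ({x}ᶜ : Set X) ⊆ ⋃ Γ : {Γ ∈ 𝒢 | x ∈ Γ.verts}, Γ.1.verts := by
    intro y hy
    obtain ⟨Γ, ⟨hΓ, hxy⟩, -⟩ := hdec s(x, y) (Ne.symm hy)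
    exact mem_iUnion.2 ⟨⟨Γ, hΓ, hxy.fst_mem⟩, hxy.snd_mem⟩
  have : Infinite X := infinite_iff.2 (hX ▸ hℵ)
  have hcompl : #({x}ᶜ : Set X) = ℵ :=
    (mk_compl_of_infinite _ (by rw [mk_singleton, hX]; exact one_lt_aleph0.trans_le hℵ)).trans hX
  exact (mk_le_mk_of_subset hcov).not_gt
    (hcompl ▸ mk_iUnion_lt hℵ hlt hℵ' fun Γ => hR1 _ Γ.2.1)

end SimpleGraph.Subgraph

/-- let `𝒢` be a decomposition of the complete graph `K_ℵ` (`ℵ`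
infinite) such that, for some cardinal `ℵ' < ℵ`, (R1) every member of `𝒢` has
order at most `ℵ'`, and (R2) for any two distinct vertices `x, y`, at most `ℵ'`
members of `𝒢` contain both `x` and `y`. Then `𝒢` is resolvable. -/
theorem stmt_18 {X : Type u} (ℵ : Cardinal.{u}) (hℵ : Cardinal.aleph0 ≤ ℵ)
    (hX : Cardinal.mk X = ℵ)
    (𝒢 : Set (⊤ : SimpleGraph X).Subgraph)
    (hdec : IsDecompositionSet (⊤ : SimpleGraph X) 𝒢)
    (ℵ' : Cardinal.{u}) (hℵ' : ℵ' < ℵ)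
    (hR1 : ∀ Γ ∈ 𝒢, Cardinal.mk ↥Γ.verts ≤ ℵ')
    (hR2 : ∀ x y : X, x ≠ y →
      Cardinal.mk ↥{Γ ∈ 𝒢 | x ∈ Γ.verts ∧ y ∈ Γ.verts} ≤ ℵ') :
    IsResolvable 𝒢 :=
  exists_partition_resolution_classes 𝒢 SimpleGraph.Subgraph.verts hℵ hℵ' hX.le
    (SimpleGraph.Subgraph.mk_le_of_mk_setOf_pair_le 𝒢 hℵ hX.le hℵ'.le hR2) hR1 hR2
    (SimpleGraph.Subgraph.le_mk_setOf_mem_verts hdec hℵ hX hℵ' hR1)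
end
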